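/- arXiv:2212.06074 — 7 statements merged into one kernel-verified Lean document; each statement's English description precedes it below -/
import Mathlib

section
/- Let P be a probability distribution on a finite set Y ⊆ ℝ, let O ⊆ ℝ be a finite output set, and let ℓ : ℝ × ℝ → ℝ≥0 satisfy: for every y ∈ ℝ, ℓ(ŷ, y) is nonincreasing in ŷ on (−∞, y] and nondecreasing in ŷ on [y, ∞), and for every ŷ ∈ ℝ, ℓ(ŷ, y) is nonincreasing in y on (−∞, ŷ] and nondecreasing in y on [ŷ, ∞). Then for every ε > 0 there exists a map Φ : Y → O such that L(RR-on-Bins^Φ_ε; P) = inf_M L(M; P), where the infimum is over all ε-DP mechanisms M with inputs in Y and outputs in O. -/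
/-!
RR-on-Bins with output set `B` that sends each `y` to a bin of `B` of least loss has expected
loss `binsLoss B`. When some bin of `B` is nobody's best, `binsLoss B` is a mediant of the loss
of `B` without that bin and the loss of that bin alone, so the least value of `binsLoss` over the
nonempty `B ⊆ O` is the loss of an actual RR-on-Bins mechanism.

Conversely, let `m o` be the least entry of column `o` of an `ε`-DP mechanism `M`, so that the
column lies in `[m o, e^ε m o]`, and choose `δ` with `(e^ε - 1) δ + ∑ min δ (m o) = 1`. Lay the
demands `min δ (m o)` end to end, outputs in increasing order, and wrap the segment around a
circle of length `δ`. The sets of bins over the points of the circle form a mixture of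
RR-on-Bins output sets whose normalisations `e^ε - 1 + |B|` average to `1`. In this mixture bin
`o` carries weight `min δ (m o)`, and the remaining weight `(e^ε - 1) δ` sits on the least loss
over each set; that least loss is stochastically smaller than the loss under the excess
`M y o - min δ (m o)`, because sublevel sets of `ℓ(·, y)` are runs of consecutive outputs and the
arcs of a run cover a part of the circle of length at least `min δ` (its demand). The
layer-cake formula turns this into an inequality of expectations.
-/

/-- Transition probability of the `RR-on-Bins` mechanism with output set `Yh`,
map `Phi` and privacy parameter `eps`. -/
noncomputable def rrProb (eps : ℝ) (Yh : Finset ℝ) (Phi : ℝ → ℝ) (y yh : ℝ) : ℝ :=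
  if yh = Phi y then Real.exp eps / (Real.exp eps + (Yh.card : ℝ) - 1)
  else 1 / (Real.exp eps + (Yh.card : ℝ) - 1)

/-- Expected loss of `RR-on-Bins` under a finitely supported prior `p` on `Y`. -/
noncomputable def rrLoss (l : ℝ → ℝ → ℝ) (eps : ℝ) (Yh : Finset ℝ) (Phi : ℝ → ℝ)
    (Y : Finset ℝ) (p : ℝ → ℝ) : ℝ :=
  ∑ y ∈ Y, p y * ∑ yh ∈ Yh, rrProb eps Yh Phi y yh * l yh y

/-- A mechanism with inputs in `Y` and outputs in `O`, given by its transition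
matrix `M`, is `eps`-DP feasible if rows are probability distributions on `O`
and the `eps`-DP constraint holds. -/
def IsFeasible (eps : ℝ) (Y O : Finset ℝ) (M : ℝ → ℝ → ℝ) : Prop :=
  (∀ y ∈ Y, ∀ yh ∈ O, 0 ≤ M y yh) ∧
  (∀ y ∈ Y, ∑ yh ∈ O, M y yh = 1) ∧
  (∀ y ∈ Y, ∀ y' ∈ Y, ∀ yh ∈ O, M y' yh ≤ Real.exp eps * M y yh)

/-- Expected loss of a mechanism with matrix `M` under prior `p` on `Y`. -/
noncomputable def mechLoss (l : ℝ → ℝ → ℝ) (Y O : Finset ℝ) (p : ℝ → ℝ)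
    (M : ℝ → ℝ → ℝ) : ℝ :=
  ∑ y ∈ Y, p y * ∑ yh ∈ O, M y yh * l yh y

open Finset

namespace RROnBins

noncomputable def next (T : Finset ℝ) (t : ℝ) : ℝ :=
  if h : (T.filter (t < ·)).Nonempty then (T.filter (t < ·)).min' h else t

section Next

variable {T : Finset ℝ} {t s u v : ℝ}

lemma le_next (T : Finset ℝ) (t : ℝ) : t ≤ next T t := by
  unfold next
  split_ifs with h
  · exact (mem_filter.1 ((T.filter (t < ·)).min'_mem h)).2.le
  · exact le_rfl

lemma next_spec (hs : s ∈ T) (hts : t < s) : next T t ∈ T ∧ t < next T t ∧ next T t ≤ s := by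
  have h : (T.filter (t < ·)).Nonempty := ⟨s, mem_filter.2 ⟨hs, hts⟩⟩
  rw [next, dif_pos h]
  exact ⟨(mem_filter.1 (min'_mem _ h)).1, (mem_filter.1 (min'_mem _ h)).2,
    min'_le _ _ (mem_filter.2 ⟨hs, hts⟩)⟩

lemma filter_lt_next (hs : s ∈ T) (hts : t < s) :
    T.filter (· < next T t) = T.filter (· ≤ t) := by
  ext x
  simp only [mem_filter, and_congr_right_iff]
  intro hx
  obtain ⟨-, htn, -⟩ := next_spec hs hts
  exact ⟨fun h => not_lt.1 fun hxt => (next_spec hx hxt).2.2.not_gt h, fun h => h.trans_lt htn⟩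

lemma sum_next_sub (hu : u ∈ T) (hv : v ∈ T) (huv : u ≤ v) :
    ∑ t ∈ T with u ≤ t ∧ t < v, (next T t - t) = v - u := by
  induction hn : (T.filter (fun t => u ≤ t ∧ t < v)).card using Nat.strong_induction_on
    generalizing v with
  | _ n ih =>
  rcases huv.eq_or_lt with rfl | huv
  · rw [filter_false_of_mem fun t _ h => (h.1.trans_lt h.2).false, sum_empty, sub_self]
  set S := T.filter (fun t => u ≤ t ∧ t < v)
  have hS : S.Nonempty := ⟨u, mem_filter.2 ⟨hu, le_rfl, huv⟩⟩
  set w := S.max' hS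
  obtain ⟨hwT, huw, hwv⟩ : w ∈ T ∧ u ≤ w ∧ w < v := mem_filter.1 (S.max'_mem hS)
  have hnext : next T w = v := by
    obtain ⟨hnT, hwn, hnv⟩ := next_spec hv hwv
    exact hnv.antisymm (not_lt.1 fun h =>
      hwn.not_ge (S.le_max' _ (mem_filter.2 ⟨hnT, huw.trans hwn.le, h⟩)))
  have hsplit : S = insert w (T.filter (fun t => u ≤ t ∧ t < w)) := by
    ext x
    simp only [S, mem_insert, mem_filter]
    constructor
    · rintro ⟨hx, hux, hxv⟩
      rcases (S.le_max' x (mem_filter.2 ⟨hx, hux, hxv⟩)).eq_or_lt with h | h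
      · exact Or.inl h
      · exact Or.inr ⟨hx, hux, h⟩
    · rintro (rfl | ⟨hx, hux, hxw⟩)
      · exact ⟨hwT, huw, hwv⟩
      · exact ⟨hx, hux, hxw.trans hwv⟩
  have hw : w ∉ T.filter (fun t => u ≤ t ∧ t < w) := by simp
  have hcard : (T.filter (fun t => u ≤ t ∧ t < w)).card < n := by
    rw [← hn, hsplit, card_insert_of_notMem hw]
    exact Nat.lt_succ_self _
  rw [hsplit, sum_insert hw, ih _ hcard hwT huw rfl, hnext]
  ring

lemma sum_filter_lt_next_sub (hT : ∀ t ∈ T, 0 ≤ t) (h0 : 0 ∈ T) (hx : s ∈ T) :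
    ∑ t ∈ T with t < s, (next T t - t) = s := by
  refine (sum_congr (filter_congr fun t ht => ?_) fun _ _ => rfl).trans
    ((sum_next_sub h0 hx (hT s hx)).trans (sub_zero s))
  exact ⟨fun h => ⟨hT t ht, h⟩, And.right⟩

end Next

lemma eq_max'_sub_sum_next_sub {T : Finset ℝ} (hT : T.Nonempty) {x : ℝ} (hx : x ∈ T) :
    x = T.max' hT - ∑ t ∈ T with t < T.max' hT, if x ≤ t then next T t - t else 0 := by
  rw [← sum_filter, filter_filter, filter_congr fun t _ => and_comm,
    sum_next_sub hx (max'_mem T hT) (le_max' T x hx)]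
  ring

lemma sum_mul_eq_layer_cake {ι : Type*} (A : Finset ι) (a f : ι → ℝ) {T : Finset ℝ}
    (hT : T.Nonempty) (hf : ∀ i ∈ A, f i ∈ T) :
    ∑ i ∈ A, a i * f i = T.max' hT * ∑ i ∈ A, a i
      - ∑ t ∈ T with t < T.max' hT, (next T t - t) * ∑ i ∈ A with f i ≤ t, a i := by
  calc ∑ i ∈ A, a i * f i
      = ∑ i ∈ A, a i * (T.max' hT
          - ∑ t ∈ T with t < T.max' hT, if f i ≤ t then next T t - t else 0) :=
        sum_congr rfl fun i hi => by rw [← eq_max'_sub_sum_next_sub hT (hf i hi)]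
    _ = ∑ i ∈ A, (a i * T.max' hT
          - ∑ t ∈ T with t < T.max' hT, (next T t - t) * if f i ≤ t then a i else 0) := by
        refine sum_congr rfl fun i _ => ?_
        rw [mul_sub, mul_sum]
        congr 1
        refine sum_congr rfl fun t _ => ?_
        split_ifs <;> ring
    _ = _ := by
        rw [sum_sub_distrib, ← sum_mul, mul_comm, sum_comm]
        simp_rw [← mul_sum, ← sum_filter]

theorem sum_mul_le_sum_mul_of_sum_filter_le {ι κ : Type*} (A : Finset ι) (B : Finset κ)
    (a f : ι → ℝ) (b g : κ → ℝ) (hmass : ∑ i ∈ A, a i = ∑ j ∈ B, b j)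
    (hdom : ∀ s, ∑ i ∈ A with f i ≤ s, a i ≤ ∑ j ∈ B with g j ≤ s, b j) :
    ∑ j ∈ B, b j * g j ≤ ∑ i ∈ A, a i * f i := by
  classical
  set T := insert 0 (A.image f ∪ B.image g)
  have hT : T.Nonempty := insert_nonempty _ _
  rw [sum_mul_eq_layer_cake A a f hT fun i hi =>
      mem_insert_of_mem (mem_union_left _ (mem_image_of_mem f hi)),
    sum_mul_eq_layer_cake B b g hT fun j hj =>
      mem_insert_of_mem (mem_union_right _ (mem_image_of_mem g hj)), hmass]
  refine sub_le_sub_left (sum_le_sum fun t _ => ?_) _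
  exact mul_le_mul_of_nonneg_left (hdom t) (sub_nonneg.2 (le_next T t))

section Cumulative

variable (O : Finset ℝ) (d : ℝ → ℝ)

noncomputable def cumBelow (x : ℝ) : ℝ := ∑ o ∈ O with o < x, d o

variable {O d}

lemma sum_filter_le_eq_cumBelow_add {o : ℝ} (ho : o ∈ O) :
    ∑ x ∈ O with x ≤ o, d x = cumBelow O d o + d o := by
  have h : O.filter (· ≤ o) = insert o (O.filter (· < o)) := by
    ext x
    simp only [mem_filter, mem_insert, le_iff_eq_or_lt]
    constructor
    · rintro ⟨hx, rfl | h⟩ <;> simp_all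
    · rintro (rfl | ⟨hx, h⟩) <;> simp_all
  rw [h, sum_insert (by simp), add_comm, cumBelow]

lemma cumBelow_next {o b : ℝ} (ho : o ∈ O) (hb : b ∈ O) (hob : o < b) :
    cumBelow O d (next O o) = cumBelow O d o + d o := by
  rw [cumBelow, filter_lt_next hb hob, sum_filter_le_eq_cumBelow_add ho]

lemma sum_filter_Icc_eq {a b : ℝ} (hb : b ∈ O) (hab : a ≤ b) :
    ∑ o ∈ O with a ≤ o ∧ o ≤ b, d o = cumBelow O d b + d b - cumBelow O d a := by
  rw [← sum_filter_le_eq_cumBelow_add hb, cumBelow,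
    ← sum_filter_add_sum_filter_not (O.filter (· ≤ b)) (· < a), filter_filter, filter_filter]
  have h1 : O.filter (fun x => x ≤ b ∧ x < a) = O.filter (· < a) :=
    filter_congr fun x _ => ⟨And.right, fun h => ⟨h.le.trans hab, h⟩⟩
  have h2 : O.filter (fun x => x ≤ b ∧ ¬x < a) = O.filter (fun x => a ≤ x ∧ x ≤ b) :=
    filter_congr fun x _ => by rw [not_lt, and_comm]
  rw [h1, h2]
  ring

lemma exists_mem_Ico_cumBelow {a b x : ℝ} (ha : a ∈ O) (hb : b ∈ O) (hab : a ≤ b)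
    (hax : cumBelow O d a ≤ x) (hxb : x < cumBelow O d b + d b) :
    ∃ o ∈ O, a ≤ o ∧ o ≤ b ∧ cumBelow O d o ≤ x ∧ x < cumBelow O d o + d o := by
  set S := O.filter fun o => a ≤ o ∧ o ≤ b ∧ cumBelow O d o ≤ x
  have hS : S.Nonempty := ⟨a, mem_filter.2 ⟨ha, le_rfl, hab, hax⟩⟩
  obtain ⟨hoO, hao, hob, hox⟩ : S.max' hS ∈ O ∧ a ≤ S.max' hS ∧ S.max' hS ≤ b ∧
      cumBelow O d (S.max' hS) ≤ x := by
    simpa only [mem_filter, S] using S.max'_mem hS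
  refine ⟨_, hoO, hao, hob, hox, not_le.1 fun hle => ?_⟩
  have hob' : S.max' hS < b := hob.lt_of_ne fun h => (h ▸ hxb).not_ge hle
  obtain ⟨hnO, hon, hnb⟩ := next_spec hb hob'
  have hn : next O (S.max' hS) ∈ S :=
    mem_filter.2 ⟨hnO, hao.trans hon.le, hnb, (cumBelow_next hoO hb hob').le.trans hle⟩
  exact hon.not_ge (S.le_max' _ hn)

end Cumulative

section LatticeCount

variable {δ : ℝ}

lemma ceil_sub_div_mono (hδ : 0 < δ) (t : ℝ) {a b : ℝ} (h : a ≤ b) :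
    ⌈(a - t) / δ⌉ ≤ ⌈(b - t) / δ⌉ :=
  Int.ceil_mono (by gcongr)

lemma ceil_sub_div_le_add_one (hδ : 0 < δ) (t : ℝ) {a b : ℝ} (h : b ≤ a + δ) :
    ⌈(b - t) / δ⌉ ≤ ⌈(a - t) / δ⌉ + 1 := by
  rw [← Int.ceil_add_one]
  exact Int.ceil_mono (by rw [div_add_one hδ.ne']; gcongr; linarith)

lemma add_one_le_ceil_sub_div (hδ : 0 < δ) (t : ℝ) {a b : ℝ} (h : a + δ ≤ b) :
    ⌈(a - t) / δ⌉ + 1 ≤ ⌈(b - t) / δ⌉ := by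
  rw [← Int.ceil_add_one]
  exact Int.ceil_mono (by rw [div_add_one hδ.ne']; gcongr; linarith)

/-- `⌈(b - t) / δ⌉ - ⌈(a - t) / δ⌉` counts the points of `t + δℤ` in `[a, b)`. -/
lemma ceil_sub_div_lt_ceil_sub_div_iff (hδ : 0 < δ) (t a b : ℝ) :
    ⌈(a - t) / δ⌉ < ⌈(b - t) / δ⌉ ↔ ∃ k : ℤ, a ≤ t + k * δ ∧ t + k * δ < b := by
  constructor
  · intro h
    refine ⟨⌈(a - t) / δ⌉, ?_, ?_⟩
    · have := (div_le_iff₀ hδ).1 (Int.le_ceil ((a - t) / δ))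
      linarith
    · have := (lt_div_iff₀ hδ).1 (Int.lt_ceil.1 h)
      linarith
  · rintro ⟨k, hak, hkb⟩
    calc ⌈(a - t) / δ⌉ ≤ k := Int.ceil_le.2 ((div_le_iff₀ hδ).2 (by linarith))
      _ < ⌈(b - t) / δ⌉ := Int.lt_ceil.2 ((lt_div_iff₀ hδ).2 (by linarith))

lemma ceil_sub_div_eq (hδ : 0 < δ) {t : ℝ} (ht0 : 0 ≤ t) (htδ : t < δ) (x : ℝ) :
    ⌈(x - t) / δ⌉ = ⌊x / δ⌋ + if t < δ * Int.fract (x / δ) then 1 else 0 := by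
  have hx : (x - t) / δ = (δ * Int.fract (x / δ) - t) / δ + ⌊x / δ⌋ := by
    rw [Int.fract]
    field_simp
    ring
  have h0 := Int.fract_nonneg (x / δ)
  have h1 := Int.fract_lt_one (x / δ)
  rw [hx, Int.ceil_add_intCast, add_comm]
  congr 1
  split_ifs with h
  · rw [Int.ceil_eq_iff, Int.cast_one, sub_self, div_le_one hδ]
    exact ⟨div_pos (by linarith) hδ, by nlinarith⟩
  · rw [Int.ceil_eq_zero_iff, Set.mem_Ioc, lt_div_iff₀ hδ]
    exact ⟨by nlinarith, div_nonpos_of_nonpos_of_nonneg (by linarith) hδ.le⟩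

lemma sum_next_sub_mul_ceil_sub_div (hδ : 0 < δ) {G : Finset ℝ}
    (hG : ∀ t ∈ G, 0 ≤ t) (h0 : 0 ∈ G) (hδG : δ ∈ G) {x : ℝ}
    (hx : δ * Int.fract (x / δ) ∈ G) :
    ∑ t ∈ G with t < δ, (next G t - t) * (⌈(x - t) / δ⌉ : ℝ) = x := by
  set ρ := δ * Int.fract (x / δ)
  have hρ : ρ < δ := mul_lt_of_lt_one_right hδ (Int.fract_lt_one _)
  have hbelow : ∑ t ∈ G with t < δ, (if t < ρ then next G t - t else 0) = ρ := by
    rw [← sum_filter, filter_filter]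
    refine (sum_congr (filter_congr fun t _ => ?_) fun _ _ => rfl).trans
      (sum_filter_lt_next_sub hG h0 hx)
    exact ⟨And.right, fun h => ⟨h.trans hρ, h⟩⟩
  calc ∑ t ∈ G with t < δ, (next G t - t) * (⌈(x - t) / δ⌉ : ℝ)
      = ∑ t ∈ G with t < δ, ((next G t - t) * ⌊x / δ⌋
          + if t < ρ then next G t - t else 0) := by
        refine sum_congr rfl fun t ht => ?_
        obtain ⟨htG, htδ⟩ := mem_filter.1 ht
        rw [ceil_sub_div_eq hδ (hG t htG) htδ]
        split_ifs <;> push_cast <;> ring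
    _ = x := by
        rw [sum_add_distrib, ← sum_mul, sum_filter_lt_next_sub hG h0 hδG, hbelow]
        simp only [ρ]
        rw [← mul_add, Int.floor_add_fract, mul_div_cancel₀ _ hδ.ne']

end LatticeCount

structure BinDecomposition (O : Finset ℝ) (d : ℝ → ℝ) (δ : ℝ) where
  pts : Finset ℝ
  weight : ℝ → ℝ
  bins : ℝ → Finset ℝ
  weight_nonneg : ∀ t ∈ pts, 0 ≤ weight t
  sum_weight : ∑ t ∈ pts, weight t = δ
  bins_subset : ∀ t, bins t ⊆ O
  bins_nonempty : ∀ t ∈ pts, (bins t).Nonempty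
  sum_weight_filter_mem : ∀ o ∈ O, ∑ t ∈ pts with o ∈ bins t, weight t = d o
  min_le_sum_weight_filter : ∀ a ∈ O, ∀ b ∈ O, a ≤ b →
    min δ (∑ o ∈ O with a ≤ o ∧ o ≤ b, d o) ≤
      ∑ t ∈ pts with ∃ o ∈ bins t, a ≤ o ∧ o ≤ b, weight t

section WrapAround

variable (O : Finset ℝ) (d : ℝ → ℝ) (δ : ℝ)

/-- The bins whose interval `[cumBelow o, cumBelow o + d o)` contains a point of `t + δℤ`. -/
noncomputable def latticeBins (t : ℝ) : Finset ℝ :=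
  O.filter fun o => ⌈(cumBelow O d o - t) / δ⌉ < ⌈(cumBelow O d o + d o - t) / δ⌉

/-- The residues modulo `δ` of all endpoints, together with `0` and `δ`: the lattice counts of
the endpoints are constant between consecutive grid points. -/
noncomputable def wrapGrid : Finset ℝ :=
  insert 0 (insert δ ((O.image fun o => δ * Int.fract (cumBelow O d o / δ)) ∪
    O.image fun o => δ * Int.fract ((cumBelow O d o + d o) / δ)))

variable {O d δ}

lemma zero_mem_wrapGrid : 0 ∈ wrapGrid O d δ := mem_insert_self _ _

lemma self_mem_wrapGrid : δ ∈ wrapGrid O d δ := mem_insert_of_mem (mem_insert_self _ _)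

lemma nonneg_of_mem_wrapGrid (hδ : 0 < δ) : ∀ t ∈ wrapGrid O d δ, 0 ≤ t := by
  intro t ht
  simp only [wrapGrid, mem_insert, mem_union, mem_image] at ht
  rcases ht with rfl | rfl | ⟨o, -, rfl⟩ | ⟨o, -, rfl⟩
  exacts [le_rfl, hδ.le, mul_nonneg hδ.le (Int.fract_nonneg _),
    mul_nonneg hδ.le (Int.fract_nonneg _)]

lemma sum_wrapGrid_next_sub (hδ : 0 < δ) :
    ∑ t ∈ wrapGrid O d δ with t < δ, (next (wrapGrid O d δ) t - t) = δ :=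
  sum_filter_lt_next_sub (nonneg_of_mem_wrapGrid hδ) zero_mem_wrapGrid self_mem_wrapGrid

lemma sum_wrapGrid_mul_ceil (hδ : 0 < δ) {o : ℝ} (ho : o ∈ O) :
    ∑ t ∈ wrapGrid O d δ with t < δ,
        (next (wrapGrid O d δ) t - t) * (⌈(cumBelow O d o - t) / δ⌉ : ℝ) = cumBelow O d o ∧
      ∑ t ∈ wrapGrid O d δ with t < δ,
        (next (wrapGrid O d δ) t - t) * (⌈(cumBelow O d o + d o - t) / δ⌉ : ℝ) =
          cumBelow O d o + d o := by
  constructor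
  · exact sum_next_sub_mul_ceil_sub_div hδ (nonneg_of_mem_wrapGrid hδ) zero_mem_wrapGrid
      self_mem_wrapGrid (mem_insert_of_mem (mem_insert_of_mem
        (mem_union_left _ (mem_image_of_mem _ ho))))
  · exact sum_next_sub_mul_ceil_sub_div hδ (nonneg_of_mem_wrapGrid hδ) zero_mem_wrapGrid
      self_mem_wrapGrid (mem_insert_of_mem (mem_insert_of_mem
        (mem_union_right _ (mem_image_of_mem _ ho))))

lemma exists_mem_latticeBins (hδ : 0 < δ) (t : ℝ) {a b : ℝ} (ha : a ∈ O) (hb : b ∈ O)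
    (hab : a ≤ b) (h : ⌈(cumBelow O d a - t) / δ⌉ < ⌈(cumBelow O d b + d b - t) / δ⌉) :
    ∃ o ∈ latticeBins O d δ t, a ≤ o ∧ o ≤ b := by
  obtain ⟨k, hak, hkb⟩ := (ceil_sub_div_lt_ceil_sub_div_iff hδ _ _ _).1 h
  obtain ⟨o, hoO, hao, hob, hok, hko⟩ := exists_mem_Ico_cumBelow ha hb hab hak hkb
  exact ⟨o, mem_filter.2 ⟨hoO, (ceil_sub_div_lt_ceil_sub_div_iff hδ _ _ _).2 ⟨k, hok, hko⟩⟩,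
    hao, hob⟩

lemma exists_mem_latticeBins_of_le_sum (hδ : 0 < δ) (t : ℝ) {a b : ℝ} (ha : a ∈ O)
    (hb : b ∈ O) (hab : a ≤ b) (h : δ ≤ ∑ o ∈ O with a ≤ o ∧ o ≤ b, d o) :
    ∃ o ∈ latticeBins O d δ t, a ≤ o ∧ o ≤ b := by
  refine exists_mem_latticeBins hδ t ha hb hab (Int.lt_of_add_one_le ?_)
  exact add_one_le_ceil_sub_div hδ t (by rw [sum_filter_Icc_eq hb hab] at h; linarith)

lemma latticeBins_nonempty (hδ : 0 < δ) (hsum : δ ≤ ∑ o ∈ O, d o) (t : ℝ) :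
    (latticeBins O d δ t).Nonempty := by
  have hO : O.Nonempty := nonempty_of_sum_ne_zero (hδ.trans_le hsum).ne'
  have hall : ∑ o ∈ O with O.min' hO ≤ o ∧ o ≤ O.max' hO, d o = ∑ o ∈ O, d o := by
    rw [filter_true_of_mem fun o ho => ⟨O.min'_le o ho, O.le_max' o ho⟩]
  obtain ⟨o, ho, -⟩ := exists_mem_latticeBins_of_le_sum hδ t (O.min'_mem hO) (O.max'_mem hO)
    (O.min'_le _ (O.max'_mem hO)) (hall ▸ hsum)
  exact ⟨o, ho⟩

lemma boole_mem_latticeBins (hδ : 0 < δ) (t : ℝ) {o : ℝ} (ho : o ∈ O) (hd0 : 0 ≤ d o)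
    (hdδ : d o ≤ δ) :
    (if o ∈ latticeBins O d δ t then 1 else 0 : ℝ) =
      ⌈(cumBelow O d o + d o - t) / δ⌉ - ⌈(cumBelow O d o - t) / δ⌉ := by
  have h1 := ceil_sub_div_mono hδ t (le_add_of_nonneg_right hd0 : cumBelow O d o ≤ _)
  have h2 := ceil_sub_div_le_add_one hδ t (add_le_add_right hdδ (cumBelow O d o))
  simp only [latticeBins, mem_filter, ho, true_and]
  split_ifs with h
  · exact_mod_cast (by omega : (1 : ℤ) = _ - _)
  · exact_mod_cast (by omega : (0 : ℤ) = _ - _)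

lemma ceil_sub_ceil_le_boole (hδ : 0 < δ) (t : ℝ) {a b : ℝ} (ha : a ∈ O) (hb : b ∈ O)
    (hab : a ≤ b) (h : ∑ o ∈ O with a ≤ o ∧ o ≤ b, d o ≤ δ) :
    (⌈(cumBelow O d b + d b - t) / δ⌉ - ⌈(cumBelow O d a - t) / δ⌉ : ℝ) ≤
      if ∃ o ∈ latticeBins O d δ t, a ≤ o ∧ o ≤ b then 1 else 0 := by
  rw [sum_filter_Icc_eq hb hab] at h
  have hstep := ceil_sub_div_le_add_one hδ t
    (show cumBelow O d b + d b ≤ cumBelow O d a + δ by linarith)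
  split_ifs with hhit
  · exact_mod_cast (by omega : _ - _ ≤ (1 : ℤ))
  · have hle : ⌈(cumBelow O d b + d b - t) / δ⌉ ≤ ⌈(cumBelow O d a - t) / δ⌉ :=
      not_lt.1 fun hlt => hhit (exists_mem_latticeBins hδ t ha hb hab hlt)
    exact_mod_cast (by omega : _ - _ ≤ (0 : ℤ))

/-- Lay the demands end to end on `[0, ∑ d)` and wrap this segment around a circle of
length `δ`; the bins over a point of the circle are those whose arcs cover it. -/
noncomputable def BinDecomposition.wrapAround (hδ : 0 < δ)
    (hd : ∀ o ∈ O, 0 ≤ d o ∧ d o ≤ δ) (hsum : δ ≤ ∑ o ∈ O, d o) : BinDecomposition O d δ where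
  pts := (wrapGrid O d δ).filter (· < δ)
  weight t := next (wrapGrid O d δ) t - t
  bins := latticeBins O d δ
  weight_nonneg t _ := sub_nonneg.2 (le_next _ t)
  sum_weight := sum_wrapGrid_next_sub hδ
  bins_subset _ := filter_subset _ _
  bins_nonempty t _ := latticeBins_nonempty hδ hsum t
  sum_weight_filter_mem o ho := by
    obtain ⟨hlow, hupp⟩ := sum_wrapGrid_mul_ceil (d := d) hδ ho
    rw [sum_filter, sum_congr rfl fun t _ => by
      rw [← mul_boole, boole_mem_latticeBins hδ t ho (hd o ho).1 (hd o ho).2, mul_sub]]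
    rw [sum_sub_distrib, hlow, hupp]
    ring
  min_le_sum_weight_filter a ha b hb hab := by
    rcases le_total δ (∑ o ∈ O with a ≤ o ∧ o ≤ b, d o) with h | h
    · rw [min_eq_left h, filter_true_of_mem fun t _ =>
        exists_mem_latticeBins_of_le_sum hδ t ha hb hab h]
      exact (sum_wrapGrid_next_sub hδ).ge
    rw [min_eq_right h, sum_filter_Icc_eq hb hab, ← (sum_wrapGrid_mul_ceil hδ hb).2,
      ← (sum_wrapGrid_mul_ceil hδ ha).1, ← sum_sub_distrib]
    rw [sum_filter (fun t => ∃ o ∈ latticeBins O d δ t, a ≤ o ∧ o ≤ b)]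
    refine sum_le_sum fun t _ => ?_
    rw [← mul_sub, ← mul_boole]
    exact mul_le_mul_of_nonneg_left (ceil_sub_ceil_le_boole hδ t ha hb hab h)
      (sub_nonneg.2 (le_next _ t))

end WrapAround

lemma min_div_le_add_div_add {a b c d : ℝ} (hb : 0 < b) (hd : 0 < d) :
    min (a / b) (c / d) ≤ (a + c) / (b + d) := by
  rcases le_total (a / b) (c / d) with h | h
  · rw [min_eq_left h, div_le_div_iff₀ hb (by positivity)]
    rw [div_le_div_iff₀ hb hd] at h
    nlinarith
  · rw [min_eq_right h, div_le_div_iff₀ hd (by positivity)]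
    rw [div_le_div_iff₀ hd hb] at h
    nlinarith

noncomputable def minOn (f : ℝ → ℝ) (B : Finset ℝ) : ℝ :=
  if h : B.Nonempty then B.inf' h f else 0

lemma minOn_eq {f : ℝ → ℝ} {B : Finset ℝ} {o : ℝ} (ho : o ∈ B) (h : ∀ o' ∈ B, f o ≤ f o') :
    minOn f B = f o := by
  rw [minOn, dif_pos ⟨o, ho⟩]
  exact le_antisymm (inf'_le f ho) (le_inf' _ _ h)

lemma minOn_le_iff {f : ℝ → ℝ} {B : Finset ℝ} (hB : B.Nonempty) (s : ℝ) :
    minOn f B ≤ s ↔ ∃ o ∈ B, f o ≤ s := by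
  rw [minOn, dif_pos hB, inf'_le_iff]

noncomputable def rrDenom (eps : ℝ) (B : Finset ℝ) : ℝ := Real.exp eps + (B.card : ℝ) - 1

lemma rrDenom_pos (eps : ℝ) {B : Finset ℝ} (hB : B.Nonempty) : 0 < rrDenom eps B := by
  have : (1 : ℝ) ≤ B.card := by exact_mod_cast hB.card_pos
  have := Real.exp_pos eps
  rw [rrDenom]
  linarith

/-- `rrDenom eps B` times the expected loss at `y` of RR-on-Bins with output set `B`, when `y`
is mapped to a best bin in `B` for the loss `f = l · y`. -/
noncomputable def binsCost (eps : ℝ) (f : ℝ → ℝ) (B : Finset ℝ) : ℝ :=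
  (Real.exp eps - 1) * minOn f B + ∑ o ∈ B, f o

noncomputable def binsLoss (l : ℝ → ℝ → ℝ) (eps : ℝ) (Y : Finset ℝ) (p : ℝ → ℝ)
    (B : Finset ℝ) : ℝ :=
  (∑ y ∈ Y, p y * binsCost eps (l · y) B) / rrDenom eps B

section RRProb

variable {eps : ℝ} {Yh : Finset ℝ} {Phi : ℝ → ℝ}

lemma rrProb_eq (y yh : ℝ) :
    rrProb eps Yh Phi y yh = (1 + if yh = Phi y then Real.exp eps - 1 else 0) / rrDenom eps Yh := by
  rw [rrProb, rrDenom]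
  split_ifs <;> ring

lemma sum_rrProb_mul {y : ℝ} (hy : Phi y ∈ Yh) (f : ℝ → ℝ) :
    ∑ yh ∈ Yh, rrProb eps Yh Phi y yh * f yh =
      ((Real.exp eps - 1) * f (Phi y) + ∑ yh ∈ Yh, f yh) / rrDenom eps Yh := by
  simp_rw [rrProb_eq, div_mul_eq_mul_div, ← sum_div, add_mul, one_mul, sum_add_distrib,
    ite_mul, zero_mul, sum_ite_eq' Yh (Phi y), if_pos hy]
  ring

lemma sum_rrProb {y : ℝ} (hy : Phi y ∈ Yh) : ∑ yh ∈ Yh, rrProb eps Yh Phi y yh = 1 := by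
  have h := sum_rrProb_mul (eps := eps) hy fun _ => 1
  simp only [mul_one, sum_const, nsmul_eq_mul] at h
  rw [h, div_eq_one_iff_eq (rrDenom_pos eps ⟨_, hy⟩).ne', rrDenom]
  ring

lemma rrProb_nonneg (heps : 0 ≤ eps) (hYh : Yh.Nonempty) (y yh : ℝ) :
    0 ≤ rrProb eps Yh Phi y yh := by
  have := Real.one_le_exp heps
  rw [rrProb_eq]
  exact div_nonneg (by split_ifs <;> linarith) (rrDenom_pos eps hYh).le

lemma rrProb_le_exp_mul (heps : 0 ≤ eps) (hYh : Yh.Nonempty) (y y' yh : ℝ) :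
    rrProb eps Yh Phi y' yh ≤ Real.exp eps * rrProb eps Yh Phi y yh := by
  have := Real.one_le_exp heps
  rw [rrProb_eq, rrProb_eq, mul_div_assoc', div_le_div_iff_of_pos_right (rrDenom_pos eps hYh)]
  split_ifs <;> nlinarith

end RRProb

noncomputable def rrMatrix (eps : ℝ) (Y : Finset ℝ) (Phi : ℝ → ℝ) (y o : ℝ) : ℝ :=
  if o ∈ Y.image Phi then rrProb eps (Y.image Phi) Phi y o else 0

lemma isFeasible_rrMatrix {eps : ℝ} (heps : 0 ≤ eps) {Y O : Finset ℝ} (hY : Y.Nonempty)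
    {Phi : ℝ → ℝ} (hPhi : ∀ y ∈ Y, Phi y ∈ O) :
    IsFeasible eps Y O (rrMatrix eps Y Phi) := by
  have hYh : (Y.image Phi).Nonempty := hY.image Phi
  have hsub : Y.image Phi ⊆ O := image_subset_iff.2 hPhi
  refine ⟨fun y _ o _ => ?_, fun y hy => ?_, fun y _ y' _ o _ => ?_⟩
  · rw [rrMatrix]
    split_ifs
    exacts [rrProb_nonneg heps hYh y o, le_rfl]
  · simp only [rrMatrix]
    rw [sum_ite_mem, inter_eq_right.2 hsub, sum_rrProb (mem_image_of_mem Phi hy)]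
  · rw [rrMatrix, rrMatrix]
    split_ifs
    exacts [rrProb_le_exp_mul heps hYh y y' o, by rw [mul_zero]]

lemma mechLoss_rrMatrix (l : ℝ → ℝ → ℝ) (eps : ℝ) {Y O : Finset ℝ} (p : ℝ → ℝ)
    {Phi : ℝ → ℝ} (hPhi : ∀ y ∈ Y, Phi y ∈ O) :
    mechLoss l Y O p (rrMatrix eps Y Phi) = rrLoss l eps (Y.image Phi) Phi Y p := by
  simp_rw [mechLoss, rrLoss, rrMatrix, ite_mul, zero_mul]
  rw [sum_congr rfl fun y _ => by rw [sum_ite_mem, inter_eq_right.2 (image_subset_iff.2 hPhi)]]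

lemma rrLoss_eq_binsLoss (l : ℝ → ℝ → ℝ) (eps : ℝ) (Y : Finset ℝ) (p : ℝ → ℝ) {Phi : ℝ → ℝ}
    (hPhi : ∀ y ∈ Y, ∀ o ∈ Y.image Phi, l (Phi y) y ≤ l o y) :
    rrLoss l eps (Y.image Phi) Phi Y p = binsLoss l eps Y p (Y.image Phi) := by
  rw [rrLoss, binsLoss, sum_div]
  refine sum_congr rfl fun y hy => ?_
  rw [sum_rrProb_mul (mem_image_of_mem Phi hy), binsCost,
    minOn_eq (mem_image_of_mem Phi hy) (hPhi y hy), mul_div_assoc]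

lemma binsLoss_singleton (l : ℝ → ℝ → ℝ) (eps : ℝ) (Y : Finset ℝ) (p : ℝ → ℝ) (o : ℝ) :
    binsLoss l eps Y p {o} = ∑ y ∈ Y, p y * l o y := by
  have hexp := (Real.exp_pos eps).ne'
  have hmin : ∀ y, minOn (l · y) {o} = l o y := fun y =>
    minOn_eq (mem_singleton_self o) fun o' ho' => by rw [mem_singleton.1 ho']
  simp only [binsLoss, binsCost, rrDenom, hmin, sum_singleton, card_singleton, Nat.cast_one]
  rw [div_eq_iff (by simp [hexp]), sum_mul]
  exact sum_congr rfl fun y _ => by ring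

/-- `binsLoss B` is a mediant of `binsLoss (B.erase o')` and `binsLoss {o'}`. -/
lemma min_binsLoss_erase_le (l : ℝ → ℝ → ℝ) (eps : ℝ) (Y : Finset ℝ) (p : ℝ → ℝ)
    {B : Finset ℝ} {o' : ℝ} (ho' : o' ∈ B) (hB' : (B.erase o').Nonempty)
    (hbest : ∀ y ∈ Y, ∃ o ∈ B.erase o', ∀ o₂ ∈ B, l o y ≤ l o₂ y) :
    min (binsLoss l eps Y p (B.erase o')) (binsLoss l eps Y p {o'}) ≤ binsLoss l eps Y p B := by
  have hcost : ∀ y ∈ Y, binsCost eps (l · y) B = binsCost eps (l · y) (B.erase o') + l o' y := by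
    intro y hy
    obtain ⟨o, ho, hmin⟩ := hbest y hy
    rw [binsCost, binsCost, minOn_eq (mem_of_mem_erase ho) hmin,
      minOn_eq ho fun o₂ ho₂ => hmin o₂ (mem_of_mem_erase ho₂), ← add_sum_erase B _ ho']
    ring
  have hdenom : rrDenom eps B = rrDenom eps (B.erase o') + 1 := by
    rw [rrDenom, rrDenom, cast_card_erase_of_mem ho']
    ring
  have h := min_div_le_add_div_add (a := ∑ y ∈ Y, p y * binsCost eps (l · y) (B.erase o'))
    (c := ∑ y ∈ Y, p y * l o' y) (rrDenom_pos eps hB') one_pos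
  rw [div_one, ← sum_add_distrib, ← hdenom] at h
  rw [binsLoss_singleton, binsLoss, binsLoss]
  refine h.trans_eq (congrArg (· / _) (sum_congr rfl fun y hy => ?_))
  rw [hcost y hy]
  ring

lemma exists_rrLoss_le_binsLoss (l : ℝ → ℝ → ℝ) (eps : ℝ) {Y : Finset ℝ} (p : ℝ → ℝ)
    (hY : Y.Nonempty) (B : Finset ℝ) (hB : B.Nonempty) :
    ∃ Phi : ℝ → ℝ, (∀ y ∈ Y, Phi y ∈ B) ∧
      rrLoss l eps (Y.image Phi) Phi Y p ≤ binsLoss l eps Y p B := by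
  induction B using Finset.strongInduction with
  | _ B ih =>
  choose Phi hPhiB hPhimin using fun y => B.exists_min_image (l · y) hB
  by_cases himage : Y.image Phi = B
  · refine ⟨Phi, fun y _ => hPhiB y, (rrLoss_eq_binsLoss l eps Y p fun y _ o ho => ?_).le.trans
      (by rw [himage])⟩
    exact hPhimin y o (himage ▸ ho)
  obtain ⟨o', ho', hnot⟩ := exists_of_ssubset
    (ssubset_of_subset_of_ne (image_subset_iff.2 fun y _ => hPhiB y) himage)
  have hsub : Y.image Phi ⊆ B.erase o' :=
    fun o ho => mem_erase.2 ⟨fun h => hnot (h ▸ ho), image_subset_iff.2 (fun y _ => hPhiB y) ho⟩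
  have hB' : (B.erase o').Nonempty := (hY.image Phi).mono hsub
  have hlt : 1 < B.card := by
    have := hB'.card_pos
    rw [card_erase_of_mem ho'] at this
    omega
  have hmin := min_binsLoss_erase_le l eps Y p ho' hB' fun y hy =>
    ⟨Phi y, hsub (mem_image_of_mem Phi hy), hPhimin y⟩
  rcases min_le_iff.1 hmin with h | h
  · obtain ⟨Phi', hPhi', hle⟩ := ih _ (erase_ssubset ho') hB'
    exact ⟨Phi', fun y hy => mem_of_mem_erase (hPhi' y hy), hle.trans h⟩
  · have hsingle : {o'} ⊂ B := Finset.ssubset_iff_subset_ne.2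
      ⟨singleton_subset_iff.2 ho', fun h => by simp [← h] at hlt⟩
    obtain ⟨Phi', hPhi', hle⟩ := ih {o'} hsingle (singleton_nonempty o')
    exact ⟨Phi', fun y hy => singleton_subset_iff.2 ho' (hPhi' y hy), hle.trans h⟩

lemma exists_forall_rrLoss_le_binsLoss (l : ℝ → ℝ → ℝ) (eps : ℝ) {Y O : Finset ℝ}
    (p : ℝ → ℝ) (hY : Y.Nonempty) (hO : O.Nonempty) :
    ∃ Phi : ℝ → ℝ, (∀ y ∈ Y, Phi y ∈ O) ∧
      ∀ B ⊆ O, B.Nonempty → rrLoss l eps (Y.image Phi) Phi Y p ≤ binsLoss l eps Y p B := by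
  obtain ⟨B, hB, hBmin⟩ := (O.powerset.filter Finset.Nonempty).exists_min_image
    (binsLoss l eps Y p) ⟨O, mem_filter.2 ⟨mem_powerset_self O, hO⟩⟩
  obtain ⟨hBO, hBne⟩ := mem_filter.1 hB
  obtain ⟨Phi, hPhiB, hPhi⟩ := exists_rrLoss_le_binsLoss l eps p hY B hBne
  exact ⟨Phi, fun y hy => mem_powerset.1 hBO (hPhiB y hy), fun B' hB'O hB' =>
    hPhi.trans (hBmin B' (mem_filter.2 ⟨mem_powerset.2 hB'O, hB'⟩))⟩

lemma quasiconvexOn_univ_of_antitoneOn_of_monotoneOn {f : ℝ → ℝ} {y : ℝ}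
    (h1 : AntitoneOn f (Set.Iic y)) (h2 : MonotoneOn f (Set.Ici y)) :
    QuasiconvexOn ℝ Set.univ f := by
  intro s
  rw [convex_iff_ordConnected]
  refine ⟨fun a ha b hb o ho => ⟨trivial, ?_⟩⟩
  rcases le_total o y with hoy | hyo
  · exact (h1 (ho.1.trans hoy) hoy ho.1).trans ha.2
  · exact (h2 hyo (hyo.trans ho.2) ho.2).trans hb.2

lemma filter_le_eq_filter_Icc {f : ℝ → ℝ} (hf : QuasiconvexOn ℝ Set.univ f) (O : Finset ℝ)
    (s : ℝ) (hI : (O.filter (f · ≤ s)).Nonempty) :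
    O.filter (f · ≤ s) =
      O.filter fun o => (O.filter (f · ≤ s)).min' hI ≤ o ∧ o ≤ (O.filter (f · ≤ s)).max' hI := by
  obtain ⟨-, ha⟩ := mem_filter.1 ((O.filter (f · ≤ s)).min'_mem hI)
  obtain ⟨-, hb⟩ := mem_filter.1 ((O.filter (f · ≤ s)).max'_mem hI)
  refine filter_congr fun o ho => ⟨fun h => ⟨min'_le _ _ (mem_filter.2 ⟨ho, h⟩),
    le_max' _ _ (mem_filter.2 ⟨ho, h⟩)⟩, fun h => ?_⟩
  exact (((convex_iff_ordConnected.1 (hf s)).out ⟨trivial, ha⟩ ⟨trivial, hb⟩) h).2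

namespace BinDecomposition

variable {O : Finset ℝ} {d : ℝ → ℝ} {δ : ℝ} (D : BinDecomposition O d δ)

lemma sum_weight_mul_sum_bins (h : ℝ → ℝ) :
    ∑ t ∈ D.pts, D.weight t * ∑ o ∈ D.bins t, h o = ∑ o ∈ O, d o * h o := by
  simp_rw [mul_sum]
  rw [sum_comm' (t' := O) (s' := fun o => D.pts.filter (o ∈ D.bins ·))
    fun t o => ⟨fun h => ⟨mem_filter.2 h, D.bins_subset t h.2⟩, fun h => mem_filter.1 h.1⟩]
  exact sum_congr rfl fun o ho => by rw [← sum_mul, D.sum_weight_filter_mem o ho]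

/-- Sublevel sets of a quasiconvex loss are runs of consecutive bins. -/
lemma min_le_sum_weight_filter_minOn {f : ℝ → ℝ} (hf : QuasiconvexOn ℝ Set.univ f) (s : ℝ) :
    min δ (∑ o ∈ O with f o ≤ s, d o) ≤ ∑ t ∈ D.pts with minOn f (D.bins t) ≤ s, D.weight t := by
  rcases (O.filter (f · ≤ s)).eq_empty_or_nonempty with hI | hI
  · have hδ : 0 ≤ δ := D.sum_weight ▸ sum_nonneg D.weight_nonneg
    rw [hI, sum_empty, min_eq_right hδ]
    exact sum_nonneg fun t ht => D.weight_nonneg t (filter_subset _ _ ht)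
  rw [filter_le_eq_filter_Icc hf O s hI]
  obtain ⟨ha, -⟩ := mem_filter.1 ((O.filter (f · ≤ s)).min'_mem hI)
  obtain ⟨hb, -⟩ := mem_filter.1 ((O.filter (f · ≤ s)).max'_mem hI)
  refine (D.min_le_sum_weight_filter _ ha _ hb (min'_le_max' _ hI)).trans_eq
    (sum_congr (filter_congr fun t ht => ?_) fun _ _ => rfl)
  rw [minOn_le_iff (D.bins_nonempty t ht)]
  refine exists_congr fun o => and_congr_right fun ho => ?_
  have hmem := congrArg (o ∈ ·) (filter_le_eq_filter_Icc hf O s hI)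
  simpa [D.bins_subset t ho] using hmem.symm

end BinDecomposition

lemma exists_cap_level {E : ℝ} (hE : 0 < E) {O : Finset ℝ} {m : ℝ → ℝ} (hm : ∀ o ∈ O, 0 ≤ m o)
    (hmass : 1 ≤ E * ∑ o ∈ O, m o) :
    ∃ δ, 0 < δ ∧ E * δ ≤ 1 ∧ (E - 1) * δ + ∑ o ∈ O, min δ (m o) = 1 := by
  set F := fun δ => (E - 1) * δ + ∑ o ∈ O, min δ (m o)
  have hF0 : F 0 = 0 := by
    simp only [F, mul_zero, zero_add]
    exact sum_eq_zero fun o ho => min_eq_left (hm o ho)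
  have hF1 : 1 ≤ F E⁻¹ := by
    have : E⁻¹ ≤ ∑ o ∈ O, min E⁻¹ (m o) := by
      by_cases h : ∃ o ∈ O, E⁻¹ ≤ m o
      · obtain ⟨o, ho, hle⟩ := h
        exact (min_eq_left hle).symm.le.trans (single_le_sum (fun o ho =>
          le_min (inv_pos.2 hE).le (hm o ho)) ho)
      · push Not at h
        rw [sum_congr rfl fun o ho => min_eq_right (h o ho).le, inv_le_iff_one_le_mul₀' hE]
        exact hmass
    simp only [F]
    rw [sub_mul, mul_inv_cancel₀ hE.ne', one_mul]
    linarith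
  have hcont : Continuous F := by fun_prop
  obtain ⟨δ, ⟨hδ0, hδE⟩, hFδ⟩ :=
    intermediate_value_Icc (inv_pos.2 hE).le hcont.continuousOn ⟨hF0.trans_le zero_le_one, hF1⟩
  refine ⟨δ, hδ0.lt_of_ne ?_, ?_, hFδ⟩
  · rintro rfl
    exact zero_ne_one (hF0.symm.trans hFδ)
  · simpa [hE.ne'] using mul_le_mul_of_nonneg_left hδE hE.le

lemma sum_sub_min_le {E δ : ℝ} (hE : 1 ≤ E) (hδ : 0 ≤ δ) {O I : Finset ℝ} (hI : I ⊆ O)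
    {r m : ℝ → ℝ} (hm0 : ∀ o ∈ O, 0 ≤ m o) (hmr : ∀ o ∈ O, m o ≤ r o)
    (hrm : ∀ o ∈ O, r o ≤ E * m o) (htot : ∑ o ∈ O, (r o - min δ (m o)) = (E - 1) * δ) :
    ∑ o ∈ I, (r o - min δ (m o)) ≤ (E - 1) * min δ (∑ o ∈ I, min δ (m o)) := by
  have hle : ∑ o ∈ I, (r o - min δ (m o)) ≤ (E - 1) * δ := htot ▸
    sum_le_sum_of_subset_of_nonneg hI fun o ho _ =>
      sub_nonneg.2 ((min_le_right _ _).trans (hmr o ho))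
  rw [mul_min_of_nonneg _ _ (sub_nonneg.2 hE)]
  refine le_min hle ?_
  by_cases hcap : ∀ o ∈ I, m o ≤ δ
  · rw [mul_sum]
    refine sum_le_sum fun o ho => ?_
    rw [min_eq_right (hcap o ho)]
    linarith [hrm o (hI ho)]
  · push Not at hcap
    obtain ⟨o, ho, hδo⟩ := hcap
    refine hle.trans (mul_le_mul_of_nonneg_left ?_ (sub_nonneg.2 hE))
    exact (min_eq_left hδo.le).ge.trans
      (single_le_sum (fun o ho => le_min hδ (hm0 o (hI ho))) ho)

lemma sum_weight_mul_binsCost_le {eps δ : ℝ} (heps : 0 ≤ eps) {O : Finset ℝ} {r m f : ℝ → ℝ}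
    (hm0 : ∀ o ∈ O, 0 ≤ m o) (hmr : ∀ o ∈ O, m o ≤ r o)
    (hrm : ∀ o ∈ O, r o ≤ Real.exp eps * m o) (hr : ∑ o ∈ O, r o = 1)
    (hlevel : (Real.exp eps - 1) * δ + ∑ o ∈ O, min δ (m o) = 1)
    (D : BinDecomposition O (fun o => min δ (m o)) δ) (hf : QuasiconvexOn ℝ Set.univ f) :
    ∑ t ∈ D.pts, D.weight t * binsCost eps f (D.bins t) ≤ ∑ o ∈ O, r o * f o := by
  have hE := Real.one_le_exp heps
  have hδ : 0 ≤ δ := D.sum_weight ▸ sum_nonneg D.weight_nonneg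
  have htot : ∑ o ∈ O, (r o - min δ (m o)) = (Real.exp eps - 1) * δ := by
    rw [sum_sub_distrib, hr]
    linarith
  have hdom : ∑ t ∈ D.pts, ((Real.exp eps - 1) * D.weight t) * minOn f (D.bins t) ≤
      ∑ o ∈ O, (r o - min δ (m o)) * f o := by
    refine sum_mul_le_sum_mul_of_sum_filter_le O D.pts _ f _ (fun t => minOn f (D.bins t))
      (by rw [htot, ← mul_sum, D.sum_weight]) fun s => ?_
    calc ∑ o ∈ O with f o ≤ s, (r o - min δ (m o))
        ≤ (Real.exp eps - 1) * min δ (∑ o ∈ O with f o ≤ s, min δ (m o)) :=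
          sum_sub_min_le hE hδ (filter_subset _ _) hm0 hmr hrm htot
      _ ≤ (Real.exp eps - 1) * ∑ t ∈ D.pts with minOn f (D.bins t) ≤ s, D.weight t :=
          mul_le_mul_of_nonneg_left (D.min_le_sum_weight_filter_minOn hf s) (sub_nonneg.2 hE)
      _ = _ := mul_sum _ _ _
  calc ∑ t ∈ D.pts, D.weight t * binsCost eps f (D.bins t)
      = ∑ t ∈ D.pts, ((Real.exp eps - 1) * D.weight t) * minOn f (D.bins t)
          + ∑ t ∈ D.pts, D.weight t * ∑ o ∈ D.bins t, f o := by
        rw [← sum_add_distrib]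
        exact sum_congr rfl fun t _ => by rw [binsCost]; ring
    _ ≤ ∑ o ∈ O, (r o - min δ (m o)) * f o + ∑ o ∈ O, min δ (m o) * f o :=
        add_le_add hdom (D.sum_weight_mul_sum_bins f).le
    _ = ∑ o ∈ O, r o * f o := by
        rw [← sum_add_distrib]
        exact sum_congr rfl fun o _ => by ring

lemma exists_colMin_of_isFeasible {eps : ℝ} {Y O : Finset ℝ} {M : ℝ → ℝ → ℝ}
    (hM : IsFeasible eps Y O M) (hY : Y.Nonempty) :
    ∃ m : ℝ → ℝ, ∀ o ∈ O, 0 ≤ m o ∧ ∀ y ∈ Y, m o ≤ M y o ∧ M y o ≤ Real.exp eps * m o := by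
  refine ⟨fun o => Y.inf' hY (M · o), fun o ho =>
    ⟨le_inf' _ _ fun y hy => hM.1 y hy o ho, fun y hy => ⟨inf'_le _ hy, ?_⟩⟩⟩
  obtain ⟨y₀, hy₀, h⟩ := exists_mem_eq_inf' hY (M · o)
  have := hM.2.2 y₀ hy₀ y hy o ho
  rwa [← h] at this

theorem le_mechLoss_of_forall_le_binsLoss {l : ℝ → ℝ → ℝ}
    (hl : ∀ y, QuasiconvexOn ℝ Set.univ (l · y)) {eps : ℝ} (heps : 0 ≤ eps)
    {Y O : Finset ℝ} {p : ℝ → ℝ} {M : ℝ → ℝ → ℝ} (hY : Y.Nonempty) (hp0 : ∀ y ∈ Y, 0 ≤ p y)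
    (hM : IsFeasible eps Y O M) {c : ℝ}
    (hc : ∀ B ⊆ O, B.Nonempty → c ≤ binsLoss l eps Y p B) :
    c ≤ mechLoss l Y O p M := by
  obtain ⟨y₀, hy₀⟩ := hY
  obtain ⟨m, hm⟩ := exists_colMin_of_isFeasible hM ⟨y₀, hy₀⟩
  have hmass : 1 ≤ Real.exp eps * ∑ o ∈ O, m o := by
    rw [← hM.2.1 y₀ hy₀, mul_sum]
    exact sum_le_sum fun o ho => ((hm o ho).2 y₀ hy₀).2
  obtain ⟨δ, hδ, hEδ, hlevel⟩ := exists_cap_level (Real.exp_pos eps) (fun o ho => (hm o ho).1) hmass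
  let D := BinDecomposition.wrapAround hδ
    (fun o ho => ⟨le_min hδ.le (hm o ho).1, min_le_left δ (m o)⟩) (by linarith)
  have hdenom : ∑ t ∈ D.pts, D.weight t * rrDenom eps (D.bins t) = 1 := by
    have h := D.sum_weight_mul_sum_bins fun _ => 1
    simp only [sum_const, nsmul_eq_mul, mul_one] at h
    calc ∑ t ∈ D.pts, D.weight t * rrDenom eps (D.bins t)
        = (Real.exp eps - 1) * ∑ t ∈ D.pts, D.weight t
          + ∑ t ∈ D.pts, D.weight t * ((D.bins t).card : ℝ) := by
          rw [mul_sum, ← sum_add_distrib]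
          exact sum_congr rfl fun t _ => by rw [rrDenom]; ring
      _ = 1 := by rw [D.sum_weight, h, hlevel]
  calc c = ∑ t ∈ D.pts, D.weight t * (c * rrDenom eps (D.bins t)) := by
        simp_rw [mul_left_comm _ c, ← mul_sum, hdenom, mul_one]
    _ ≤ ∑ t ∈ D.pts, D.weight t * ∑ y ∈ Y, p y * binsCost eps (l · y) (D.bins t) :=
        sum_le_sum fun t ht => mul_le_mul_of_nonneg_left
          ((le_div_iff₀ (rrDenom_pos eps (D.bins_nonempty t ht))).1
            (hc _ (D.bins_subset t) (D.bins_nonempty t ht))) (D.weight_nonneg t ht)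
    _ = ∑ y ∈ Y, p y * ∑ t ∈ D.pts, D.weight t * binsCost eps (l · y) (D.bins t) := by
        simp_rw [mul_sum]
        rw [sum_comm]
        exact sum_congr rfl fun y _ => sum_congr rfl fun t _ => by ring
    _ ≤ mechLoss l Y O p M :=
        sum_le_sum fun y hy => mul_le_mul_of_nonneg_left (sum_weight_mul_binsCost_le heps
          (fun o ho => (hm o ho).1) (fun o ho => ((hm o ho).2 y hy).1)
          (fun o ho => ((hm o ho).2 y hy).2) (hM.2.1 y hy) hlevel D (hl y)) (hp0 y hy)

end RROnBins

theorem stmt2_general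
    (l : ℝ → ℝ → ℝ)
    (h1 : ∀ y : ℝ, AntitoneOn (fun yh => l yh y) (Set.Iic y))
    (h2 : ∀ y : ℝ, MonotoneOn (fun yh => l yh y) (Set.Ici y))
    (Y O : Finset ℝ) (hO : O.Nonempty)
    (p : ℝ → ℝ) (hp0 : ∀ y ∈ Y, 0 ≤ p y) (hp1 : ∑ y ∈ Y, p y = 1)
    (eps : ℝ) (heps : 0 < eps) :
    ∃ Phi : ℝ → ℝ, (∀ y ∈ Y, Phi y ∈ O) ∧
      rrLoss l eps (Y.image Phi) Phi Y p =
        sInf { L : ℝ | ∃ M : ℝ → ℝ → ℝ, IsFeasible eps Y O M ∧ L = mechLoss l Y O p M } := by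
  have hY : Y.Nonempty := nonempty_of_sum_ne_zero (hp1 ▸ one_ne_zero)
  obtain ⟨Phi, hPhiO, hPhi⟩ := RROnBins.exists_forall_rrLoss_le_binsLoss l eps p hY hO
  have hleast : IsLeast { L : ℝ | ∃ M : ℝ → ℝ → ℝ, IsFeasible eps Y O M ∧ L = mechLoss l Y O p M }
      (rrLoss l eps (Y.image Phi) Phi Y p) := by
    refine ⟨⟨_, RROnBins.isFeasible_rrMatrix heps.le hY hPhiO,
      (RROnBins.mechLoss_rrMatrix l eps p hPhiO).symm⟩, ?_⟩
    rintro _ ⟨M, hM, rfl⟩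
    exact RROnBins.le_mechLoss_of_forall_le_binsLoss
      (fun y => RROnBins.quasiconvexOn_univ_of_antitoneOn_of_monotoneOn (h1 y) (h2 y)) heps.le hY
      hp0 hM hPhi
  exact ⟨Phi, hPhiO, hleast.csInf_eq.symm⟩

/-- For (weakly) unimodal losses, some `RR-on-Bins` mechanism (with output set the
range `Phi(Y) ⊆ O`) achieves the infimum of the expected loss over all `eps`-DP
mechanisms with inputs in `Y` and outputs in `O`. -/
theorem stmt2
    (l : ℝ → ℝ → ℝ) (hl0 : ∀ yh y, 0 ≤ l yh y)
    (h1 : ∀ y : ℝ, AntitoneOn (fun yh => l yh y) (Set.Iic y))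
    (h2 : ∀ y : ℝ, MonotoneOn (fun yh => l yh y) (Set.Ici y))
    (h3 : ∀ yh : ℝ, AntitoneOn (fun y => l yh y) (Set.Iic yh))
    (h4 : ∀ yh : ℝ, MonotoneOn (fun y => l yh y) (Set.Ici yh))
    (Y O : Finset ℝ) (hO : O.Nonempty)
    (p : ℝ → ℝ) (hp0 : ∀ y ∈ Y, 0 ≤ p y) (hp1 : ∑ y ∈ Y, p y = 1)
    (eps : ℝ) (heps : 0 < eps) :
    ∃ Phi : ℝ → ℝ, (∀ y ∈ Y, Phi y ∈ O) ∧
      rrLoss l eps (Y.image Phi) Phi Y p =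
        sInf { L : ℝ | ∃ M : ℝ → ℝ → ℝ, IsFeasible eps Y O M ∧ L = mechLoss l Y O p M } :=
  stmt2_general l h1 h2 Y O hO p hp0 hp1 eps heps
end

section
/- Fix ε > 0, a finite label set Y ⊆ ℝ and a finite output set O ⊆ ℝ, and let M be a feasible matrix. Let Ŷ ⊆ O be its set of non-zero columns and suppose |Ŷ| ≥ 2. Suppose that: (a) for every ŷ ∈ Ŷ and every y ∈ Y, M_{y→ŷ} ∈ {p^min_ŷ, e^ε · p^min_ŷ}, and each column ŷ ∈ Ŷ contains at least one entry equal to p^min_ŷ and at least one entry equal to e^ε · p^min_ŷ; (b) for every y ∈ Y there is exactly one ŷ ∈ Ŷ, denoted Ψ(y), with M_{y→Ψ(y)} = e^ε · p^min_{Ψ(y)}; and (c) Ψ is non-decreasing, i.e., y < y' implies Ψ(y) ≤ Ψ(y'). Then M_{y→ŷ} = e^ε/(e^ε + |Ŷ| − 1) if ŷ = Ψ(y) and M_{y→ŷ} = 1/(e^ε + |Ŷ| − 1) if ŷ ∈ Ŷ \ {Ψ(y)}; in particular M is exactly the transition matrix of RR-on-Bins^Ψ_ε with output set Ŷ, and Ψ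 is non-decreasing. -/
/-- Characterization of feasible matrices whose signature satisfies conditions
(2a)-(2c): they are exactly the transition matrices of `RR-on-Bins` mechanisms. -/
theorem stmt3
    (eps : ℝ) (heps : 0 < eps)
    (Y O : Finset ℝ) (hY : Y.Nonempty)
    (M : ℝ → ℝ → ℝ)
    -- feasibility: nonnegative entries, rows sum to one, eps-DP constraint
    (hnn : ∀ y ∈ Y, ∀ yh ∈ O, 0 ≤ M y yh)
    (hrow : ∀ y ∈ Y, ∑ yh ∈ O, M y yh = 1)
    (hdp : ∀ y ∈ Y, ∀ y' ∈ Y, ∀ yh ∈ O, M y' yh ≤ Real.exp eps * M y yh)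
    -- `Yh` is the set of non-zero columns of `M`
    (Yh : Finset ℝ)
    (hYh : ∀ yh : ℝ, yh ∈ Yh ↔ yh ∈ O ∧ ∃ y ∈ Y, 0 < M y yh)
    (hk2 : 2 ≤ Yh.card)
    -- (a): every entry of a non-zero column `yh` equals `p^min_yh` or `exp eps * p^min_yh`,
    -- and each non-zero column contains at least one entry of each kind
    (ha : ∀ yh ∈ Yh,
      (∀ y ∈ Y, M y yh = Y.inf' hY (fun y' => M y' yh) ∨
        M y yh = Real.exp eps * Y.inf' hY (fun y' => M y' yh)) ∧
      (∃ y ∈ Y, M y yh = Y.inf' hY (fun y' => M y' yh)) ∧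
      (∃ y ∈ Y, M y yh = Real.exp eps * Y.inf' hY (fun y' => M y' yh)))
    -- (b): each row has exactly one "upper" entry, in column `Psi y`
    (Psi : ℝ → ℝ)
    (hbmem : ∀ y ∈ Y, Psi y ∈ Yh)
    (hbU : ∀ y ∈ Y, M y (Psi y) = Real.exp eps * Y.inf' hY (fun y' => M y' (Psi y)))
    (hbuniq : ∀ y ∈ Y, ∀ yh ∈ Yh,
      M y yh = Real.exp eps * Y.inf' hY (fun y' => M y' yh) → yh = Psi y)
    -- (c): `Psi` is non-decreasing on `Y`
    (hc : ∀ y ∈ Y, ∀ y' ∈ Y, y < y' → Psi y ≤ Psi y') :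
    -- conclusion: `M` is exactly the transition matrix of `RR-on-Bins` with map `Psi`
    -- and output set `Yh`, and `Psi` is non-decreasing on `Y`
    (∀ y ∈ Y, ∀ yh ∈ Yh,
      M y yh = if yh = Psi y then Real.exp eps / (Real.exp eps + (Yh.card : ℝ) - 1)
               else 1 / (Real.exp eps + (Yh.card : ℝ) - 1)) ∧
    MonotoneOn Psi (Y : Set ℝ) := by
  classical
  set E := Real.exp eps with hEdef
  have hE1 : 1 < E := by
    rw [hEdef, Real.one_lt_exp_iff]
    exact heps
  set p : ℝ → ℝ := fun yh => Y.inf' hY (fun y' => M y' yh) with hpdef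
  have hYhO : Yh ⊆ O := fun yh h => ((hYh yh).mp h).1
  have hzero : ∀ y ∈ Y, ∀ yh ∈ O, yh ∉ Yh → M y yh = 0 := by
    intro y hy yh hyh hnot
    by_contra h
    exact hnot ((hYh yh).mpr ⟨hyh, y, hy,
      lt_of_le_of_ne (hnn y hy yh hyh) (Ne.symm h)⟩)
  have hrow' : ∀ y ∈ Y, ∑ yh ∈ Yh, M y yh = 1 := by
    intro y hy
    rw [← hrow y hy]
    exact Finset.sum_subset hYhO (fun x hx hnx => hzero y hy x hx hnx)
  have hdichot : ∀ y ∈ Y, ∀ yh ∈ Yh, yh ≠ Psi y → M y yh = p yh := by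
    intro y hy yh hyh hne
    rcases (ha yh hyh).1 y hy with h | h
    · exact h
    · exact absurd (hbuniq y hy yh hyh h) hne
  set S := ∑ yh ∈ Yh, p yh with hSdef
  have hsum : ∀ y ∈ Y, S + (E - 1) * p (Psi y) = 1 := by
    intro y hy
    have h1 : ∑ yh ∈ Yh, (M y yh - p yh) = (E - 1) * p (Psi y) := by
      rw [Finset.sum_eq_single (Psi y)]
      · rw [hbU y hy]; ring
      · intro b hb hne
        rw [hdichot y hy b hb hne]; ring
      · intro h; exact absurd (hbmem y hy) h
    have h2 := hrow' y hy
    have h3 : ∑ yh ∈ Yh, (M y yh - p yh) = 1 - S := by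
      rw [Finset.sum_sub_distrib, h2, hSdef]
    linarith [h1, h3]
  have hsurj : ∀ c ∈ Yh, ∃ y ∈ Y, Psi y = c := by
    intro c hc'
    obtain ⟨y, hy, hyc⟩ := (ha c hc').2.2
    exact ⟨y, hy, (hbuniq y hy c hc' hyc).symm⟩
  have hpc : ∀ c ∈ Yh, (E - 1) * p c = 1 - S := by
    intro c hc'
    obtain ⟨y, hy, hyc⟩ := hsurj c hc'
    have := hsum y hy
    rw [hyc] at this
    linarith
  have hk : (2 : ℝ) ≤ (Yh.card : ℝ) := by exact_mod_cast hk2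
  have hden : 0 < E + (Yh.card : ℝ) - 1 := by linarith
  have hpval : ∀ c ∈ Yh, p c = 1 / (E + (Yh.card : ℝ) - 1) := by
    intro c hc'
    have hSsum : (E - 1) * S = (Yh.card : ℝ) * (1 - S) := by
      have : ∑ yh ∈ Yh, (E - 1) * p yh = ∑ yh ∈ Yh, (1 - S) :=
        Finset.sum_congr rfl (fun x hx => hpc x hx)
      rw [← Finset.mul_sum] at this
      rw [Finset.sum_const, nsmul_eq_mul] at this
      rw [hSdef]; linarith [this]
    have h1 := hpc c hc'
    have hE1' : (0:ℝ) < E - 1 := by linarith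
    field_simp
    nlinarith [hSsum, h1]
  constructor
  · intro y hy yh hyh
    by_cases hcase : yh = Psi y
    · rw [if_pos hcase, hcase]
      have := hbU y hy
      rw [this, show (Y.inf' hY fun y' => M y' (Psi y)) = p (Psi y) from rfl,
        hpval (Psi y) (hbmem y hy)]
      field_simp
    · rw [if_neg hcase, hdichot y hy yh hyh hcase, hpval yh hyh]
  · intro a ha' b hb' hab
    rcases eq_or_lt_of_le hab with h | h
    · rw [h]
    · exact hc a ha' b hb' h
end

section
/- Fix ε > 0, a finite label set Y ⊆ ℝ and a finite output set O ⊆ ℝ. Let M be an extreme point (vertex) of the convex polytope of feasible matrices, and suppose the number k of non-zero columns of M satisfies k ≥ 2. Then there exist k pairwise distinct labels y_1, …, y_k ∈ Y such that for every i ∈ {1, …, k} and every non-zero column ŷ, M_{y_i→ŷ} ∈ {p^min_ŷ, e^ε · p^min_ŷ}, and the k rows of M indexed by y_1, …, y_k, restricted to the non-zero columns, are pairwise distinct. -/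
/-!
Scaling each column `ŷ` of `M` by `1 + s δ ŷ` keeps every entry nonnegative and every privacy
constraint, tight or not, satisfied for small `s`; it only shifts the row sums, by
`s ∑ ŷ, δ ŷ M y ŷ`. A row having an entry strictly between the column minimum and `exp eps`
times it can absorb this shift at that entry, since no constraint through it is tight. Hence if
`δ` (on the non-zero columns) is orthogonal to all remaining, extreme, rows, then `M` lies in the
middle of a feasible segment in direction `δ`, and extremality forces `δ = 0`. By a dimension
count the extreme rows, restricted to the `k` non-zero columns, take at least `k` distinct values.
-/

/-- The convex polytope of feasible transition matrices from the label set `Y` to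
the output set `O`: nonnegative entries, rows summing to one, `eps`-DP constraint. -/
def Feas (eps : ℝ) (Y O : Finset ℝ) : Set (↥Y → ↥O → ℝ) :=
  { N | (∀ y yh, 0 ≤ N y yh) ∧ (∀ y, ∑ yh, N y yh = 1) ∧
        (∀ y y' yh, N y' yh ≤ Real.exp eps * N y yh) }

open Filter Topology

lemma eq_zero_of_mem_extremePoints_of_eventually {E : Type*} [AddCommGroup E] [Module ℝ E]
    {A : Set E} {x d : E} (hx : x ∈ A.extremePoints ℝ)
    (h : ∀ᶠ s : ℝ in 𝓝 0, x + s • d ∈ A) : d = 0 := by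
  obtain ⟨t, ht, hball⟩ := Metric.eventually_nhds_iff.1 h
  have hmem : ∀ s, |s| < t → x + s • d ∈ A := fun s hs => hball (by simpa using hs)
  have hpos := hmem (t / 2) (by rw [abs_of_pos (by positivity)]; linarith)
  have hneg := hmem (-(t / 2)) (by rw [abs_neg, abs_of_pos (by positivity)]; linarith)
  rw [neg_smul, ← sub_eq_add_neg] at hneg
  have := (mem_extremePoints.1 hx).2 _ hneg _ hpos (mem_openSegment_sub_add x _)
  simpa [ht.ne'] using this.2

lemma eventually_add_mul_le_add_mul {a b c e : ℝ} (h : a ≤ b) (htight : a = b → c = e) :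
    ∀ᶠ s : ℝ in 𝓝 0, a + s * c ≤ b + s * e := by
  rcases h.lt_or_eq with hlt | heq
  · refine (ContinuousAt.eventually_lt (f := fun s : ℝ => a + s * c) (g := fun s => b + s * e)
      (by fun_prop) (by fun_prop) (by simpa using hlt)).mono fun s hs => hs.le
  · exact .of_forall fun s => by rw [heq, htight heq]

lemma exists_ne_zero_forall_dotProduct_eq_zero {ι : Type*} [Fintype ι]
    (V : Finset (ι → ℝ)) (h : V.card < Fintype.card ι) :
    ∃ δ : ι → ℝ, δ ≠ 0 ∧ ∀ v ∈ V, v ⬝ᵥ δ = 0 := by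
  let A : Matrix V ι ℝ := fun v => v.1
  obtain ⟨δ, hδ, hne⟩ := (Submodule.ne_bot_iff _).1
    (LinearMap.ker_ne_bot_of_finrank_lt (f := A.mulVecLin) (by simpa using h))
  exact ⟨δ, hne, fun v hv => congrFun (LinearMap.mem_ker.1 hδ) ⟨v, hv⟩⟩

section Feasible

variable {eps : ℝ} {Y O : Finset ℝ} {M : ↥Y → ↥O → ℝ}

noncomputable def colMin (M : ↥Y → ↥O → ℝ) (yh : ↥O) : ℝ :=
  sInf (Set.range fun y => M y yh)

def nonzeroCols (M : ↥Y → ↥O → ℝ) : Set ↥O :=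
  {yh | ∃ y, 0 < M y yh}

def restrictedRow (M : ↥Y → ↥O → ℝ) (y : ↥Y) : nonzeroCols M → ℝ :=
  fun yh => M y yh

def IsExtremeRow (eps : ℝ) (M : ↥Y → ↥O → ℝ) (y : ↥Y) : Prop :=
  ∀ yh ∈ nonzeroCols M, M y yh = colMin M yh ∨ M y yh = Real.exp eps * colMin M yh

def IsInteriorEntry (eps : ℝ) (M : ↥Y → ↥O → ℝ) (y : ↥Y) (yh : ↥O) : Prop :=
  colMin M yh < M y yh ∧ M y yh < Real.exp eps * colMin M yh

lemma colMin_le (y : ↥Y) (yh : ↥O) : colMin M yh ≤ M y yh :=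
  csInf_le (Set.finite_range _).bddBelow ⟨y, rfl⟩

lemma exists_eq_colMin [Nonempty ↥Y] (yh : ↥O) : ∃ y, M y yh = colMin M yh :=
  (Set.range_nonempty _).csInf_mem (Set.finite_range _)

lemma colMin_nonneg (hM : M ∈ Feas eps Y O) (yh : ↥O) : 0 ≤ colMin M yh :=
  Real.sInf_nonneg <| Set.forall_mem_range.2 fun y => hM.1 y yh

lemma le_exp_mul_colMin (hM : M ∈ Feas eps Y O) (y : ↥Y) (yh : ↥O) :
    M y yh ≤ Real.exp eps * colMin M yh := by
  have : Nonempty ↥Y := ⟨y⟩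
  obtain ⟨y₀, hy₀⟩ := exists_eq_colMin (M := M) yh
  exact hy₀ ▸ hM.2.2 y₀ y yh

lemma colMin_pos (hM : M ∈ Feas eps Y O) {yh : ↥O} (hyh : yh ∈ nonzeroCols M) :
    0 < colMin M yh := by
  obtain ⟨y, hy⟩ := hyh
  exact pos_of_mul_pos_right (hy.trans_le (le_exp_mul_colMin hM y yh)) (Real.exp_pos eps).le

lemma exists_isInteriorEntry (hM : M ∈ Feas eps Y O) {y : ↥Y} (hy : ¬ IsExtremeRow eps M y) :
    ∃ yh, IsInteriorEntry eps M y yh := by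
  simp only [IsExtremeRow, not_forall, not_or] at hy
  obtain ⟨yh, -, hmin, hmax⟩ := hy
  exact ⟨yh, (colMin_le y yh).lt_of_ne' hmin, (le_exp_mul_colMin hM y yh).lt_of_ne hmax⟩

lemma not_isInteriorEntry_of_tight (hM : M ∈ Feas eps Y O) {y y' : ↥Y} {yh : ↥O}
    (htight : M y' yh = Real.exp eps * M y yh) :
    ¬ IsInteriorEntry eps M y yh ∧ ¬ IsInteriorEntry eps M y' yh := by
  have hexp := Real.exp_pos eps
  have hy : M y yh ≤ colMin M yh :=
    le_of_mul_le_mul_left (htight ▸ le_exp_mul_colMin hM y' yh) hexp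
  refine ⟨fun h => h.1.not_ge hy, fun h => ?_⟩
  have := htight ▸ h.2
  exact (lt_of_mul_lt_mul_left this hexp.le).not_ge (colMin_le y yh)

lemma eventually_add_smul_mem_feas (hM : M ∈ Feas eps Y O) {d : ↥Y → ↥O → ℝ}
    (hsum : ∀ y, ∑ yh, d y yh = 0) (hzero : ∀ y yh, M y yh = 0 → d y yh = 0)
    (htight : ∀ y y' yh, M y' yh = Real.exp eps * M y yh →
      d y' yh = Real.exp eps * d y yh) :
    ∀ᶠ s : ℝ in 𝓝 0, M + s • d ∈ Feas eps Y O := by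
  simp only [Feas, Set.mem_ofPred_eq, Pi.add_apply, Pi.smul_apply, smul_eq_mul,
    eventually_and, eventually_all]
  refine ⟨fun y yh => ?_, fun y => .of_forall fun s => ?_, fun y y' yh => ?_⟩
  · simpa using eventually_add_mul_le_add_mul (c := 0) (hM.1 y yh)
      fun h => (hzero y yh h.symm).symm
  · rw [Finset.sum_add_distrib, ← Finset.mul_sum, hM.2.1 y, hsum y, mul_zero, add_zero]
  · filter_upwards [eventually_add_mul_le_add_mul (hM.2.2 y y' yh) (htight y y' yh)]
      with s hs
    linarith

lemma exists_rowCorrection (hM : M ∈ Feas eps Y O) (r : ↥Y → ℝ)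
    (hr : ∀ y, IsExtremeRow eps M y → r y = 0) :
    ∃ c : ↥Y → ↥O → ℝ, (∀ y yh, c y yh ≠ 0 → IsInteriorEntry eps M y yh) ∧
      ∀ y, ∑ yh, c y yh = r y := by
  classical
  have (y : ↥Y) : ∃ cy : ↥O → ℝ, (∀ yh, cy yh ≠ 0 → IsInteriorEntry eps M y yh) ∧
      ∑ yh, cy yh = r y := by
    by_cases hy : IsExtremeRow eps M y
    · exact ⟨0, fun yh h => absurd rfl h, by simp [hr y hy]⟩
    · obtain ⟨yh, hyh⟩ := exists_isInteriorEntry hM hy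
      refine ⟨Pi.single yh (r y), fun yh' h => ?_, by simp⟩
      obtain rfl : yh' = yh := by by_contra hne; simp [hne] at h
      exact hyh
  choose c hc using this
  exact ⟨c, fun y => (hc y).1, fun y => (hc y).2⟩

lemma eq_zero_of_forall_isExtremeRow (hMext : M ∈ (Feas eps Y O).extremePoints ℝ)
    {δ : ↥O → ℝ} (hδ : ∀ y, IsExtremeRow eps M y → ∑ yh, δ yh * M y yh = 0)
    {yh : ↥O} (hyh : yh ∈ nonzeroCols M) : δ yh = 0 := by
  have hM := hMext.1
  obtain ⟨c, hc, hcsum⟩ := exists_rowCorrection hM (fun y => ∑ yh, δ yh * M y yh) hδ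
  have hc_zero (y : ↥Y) (yh : ↥O) (h : ¬ IsInteriorEntry eps M y yh) : c y yh = 0 :=
    not_imp_comm.1 (hc y yh) h
  set d : ↥Y → ↥O → ℝ := fun y yh => δ yh * M y yh - c y yh
  have hd : d = 0 := eq_zero_of_mem_extremePoints_of_eventually hMext <|
    eventually_add_smul_mem_feas hM
      (fun y => by simp only [d, Finset.sum_sub_distrib, hcsum, sub_self])
      (fun y yh h => by
        simp [d, h, hc_zero y yh fun hi => (hi.1.trans_eq h).not_ge (colMin_nonneg hM yh)])
      (fun y y' yh h => by
        obtain ⟨hy, hy'⟩ := not_isInteriorEntry_of_tight hM h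
        simp only [d, hc_zero _ _ hy, hc_zero _ _ hy', h]
        ring)
  have : Nonempty ↥Y := ⟨hyh.choose⟩
  obtain ⟨y₀, hy₀⟩ := exists_eq_colMin (M := M) yh
  have := congrFun (congrFun hd y₀) yh
  simpa [d, hc_zero y₀ yh fun h => h.1.ne' hy₀, hy₀, (colMin_pos hM hyh).ne'] using this

open Classical in
noncomputable def extremeRowRestrictions (eps : ℝ) (M : ↥Y → ↥O → ℝ) :
    Finset (nonzeroCols M → ℝ) :=
  (Finset.univ.filter (IsExtremeRow eps M)).image (restrictedRow M)

lemma mem_extremeRowRestrictions {v : nonzeroCols M → ℝ} :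
    v ∈ extremeRowRestrictions eps M ↔
      ∃ y, IsExtremeRow eps M y ∧ restrictedRow M y = v := by
  simp [extremeRowRestrictions]

lemma ncard_nonzeroCols_le (hMext : M ∈ (Feas eps Y O).extremePoints ℝ) :
    (nonzeroCols M).ncard ≤ (extremeRowRestrictions eps M).card := by
  classical
  by_contra! hlt
  rw [← Nat.card_coe_set_eq, Nat.card_eq_fintype_card] at hlt
  obtain ⟨δ, hne, hδ⟩ := exists_ne_zero_forall_dotProduct_eq_zero _ hlt
  let δ' : ↥O → ℝ := fun yh => if h : yh ∈ nonzeroCols M then δ ⟨yh, h⟩ else 0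
  refine hne (funext fun i => ?_)
  have := eq_zero_of_forall_isExtremeRow hMext (δ := δ') ?_ i.2
  · simpa [δ'] using this
  intro y hy
  have := hδ _ (mem_extremeRowRestrictions.2 ⟨y, hy, rfl⟩)
  have hout : ∑ i : {yh // yh ∉ nonzeroCols M}, δ' i * M y i = 0 :=
    Finset.sum_eq_zero fun i _ => by simp [δ', i.2]
  rw [← Fintype.sum_subtype_add_sum_subtype (· ∈ nonzeroCols M), hout, add_zero, ← this]
  simp [δ', restrictedRow, dotProduct, mul_comm]

end Feasible

theorem stmt4_general
    (eps : ℝ)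
    (Y O : Finset ℝ)
    (M : ↥Y → ↥O → ℝ)
    (hMext : M ∈ Set.extremePoints ℝ (Feas eps Y O))
    (k : ℕ)
    (hk : k = {yh : ↥O | ∃ y, 0 < M y yh}.ncard) :
    ∃ f : Fin k → ↥Y, Function.Injective f ∧
      (∀ i : Fin k, ∀ yh : ↥O, (∃ y, 0 < M y yh) →
        M (f i) yh = sInf (Set.range fun y => M y yh) ∨
        M (f i) yh = Real.exp eps * sInf (Set.range fun y => M y yh)) ∧
      (∀ i j : Fin k, i ≠ j →
        ∃ yh : ↥O, (∃ y, 0 < M y yh) ∧ M (f i) yh ≠ M (f j) yh) := by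
  obtain ⟨emb⟩ : Nonempty (Fin k ↪ extremeRowRestrictions eps M) :=
    Function.Embedding.nonempty_of_card_le <| by
      rw [Fintype.card_fin, Fintype.card_coe, hk]
      exact ncard_nonzeroCols_le hMext
  choose row hrowExt hrowEq using fun v : extremeRowRestrictions eps M =>
    mem_extremeRowRestrictions.1 v.2
  have hrow_ne {i j : Fin k} (hij : i ≠ j) :
      restrictedRow M (row (emb i)) ≠ restrictedRow M (row (emb j)) := by
    rw [hrowEq, hrowEq]
    exact fun h => hij (emb.injective (Subtype.ext h))
  refine ⟨fun i => row (emb i), fun i j hij => ?_, fun i => hrowExt (emb i), fun i j hij => ?_⟩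
  · exact by_contra fun hne => hrow_ne hne (congrArg (restrictedRow M) hij)
  · obtain ⟨⟨yh, hyh⟩, hne⟩ := Function.ne_iff.1 (hrow_ne hij)
    exact ⟨yh, hyh, hne⟩

/-- Any vertex (extreme point) of the feasible polytope with `k ≥ 2` non-zero
columns has a `k × k` submatrix with pairwise distinct rows all of whose entries
are `p^min` or `exp eps * p^min` of the corresponding column. -/
theorem stmt4
    (eps : ℝ) (heps : 0 < eps)
    (Y O : Finset ℝ)
    (M : ↥Y → ↥O → ℝ)
    (hMext : M ∈ Set.extremePoints ℝ (Feas eps Y O))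
    (k : ℕ)
    (hk : k = {yh : ↥O | ∃ y, 0 < M y yh}.ncard)
    (hk2 : 2 ≤ k) :
    ∃ f : Fin k → ↥Y, Function.Injective f ∧
      (∀ i : Fin k, ∀ yh : ↥O, (∃ y, 0 < M y yh) →
        M (f i) yh = sInf (Set.range fun y => M y yh) ∨
        M (f i) yh = Real.exp eps * sInf (Set.range fun y => M y yh)) ∧
      (∀ i j : Fin k, i ≠ j →
        ∃ yh : ↥O, (∃ y, 0 < M y yh) ∧ M (f i) yh ≠ M (f j) yh) :=
  stmt4_general eps Y O M hMext k hk
end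

section
/- Let ℓ : ℝ × ℝ → ℝ≥0 satisfy Assumption 1. Then for all y₁ < y₂ and ŷ₁ < ŷ₂ in ℝ, it is impossible that both ℓ(ŷ₁, y₁) > ℓ(ŷ₂, y₁) and ℓ(ŷ₂, y₂) > ℓ(ŷ₁, y₂) hold. -/
/-- For a loss satisfying Assumption 1, for `y₁ < y₂` and `yh₁ < yh₂` it is
impossible that both `l yh₁ y₁ > l yh₂ y₁` and `l yh₂ y₂ > l yh₁ y₂`. -/
theorem stmt6
    (l : ℝ → ℝ → ℝ) (hl0 : ∀ yh y, 0 ≤ l yh y)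
    (hcont : ∀ y : ℝ, Continuous fun yh => l yh y)
    (ha1 : ∀ y : ℝ, AntitoneOn (fun yh => l yh y) (Set.Iic y))
    (hm1 : ∀ y : ℝ, MonotoneOn (fun yh => l yh y) (Set.Ici y))
    (ha2 : ∀ yh : ℝ, AntitoneOn (fun y => l yh y) (Set.Iic yh))
    (hm2 : ∀ yh : ℝ, MonotoneOn (fun y => l yh y) (Set.Ici yh))
    (y₁ y₂ yh₁ yh₂ : ℝ) (hy : y₁ < y₂) (hyh : yh₁ < yh₂) :
    ¬ (l yh₂ y₁ < l yh₁ y₁ ∧ l yh₁ y₂ < l yh₂ y₂) := by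
  rintro ⟨h1, h2⟩
  -- yh₁ < y₁
  have hA : yh₁ < y₁ := by
    by_contra h
    push_neg at h
    exact absurd (hm1 y₁ (Set.mem_Ici.2 h) (Set.mem_Ici.2 (h.trans hyh.le)) hyh.le)
      (not_le.2 h1)
  -- y₂ < yh₂
  have hB : y₂ < yh₂ := by
    by_contra h
    push_neg at h
    exact absurd (ha1 y₂ (Set.mem_Iic.2 (hyh.le.trans h)) (Set.mem_Iic.2 h) hyh.le)
      (not_le.2 h2)
  have c1 : l yh₁ y₁ ≤ l yh₁ y₂ :=
    hm2 yh₁ (Set.mem_Ici.2 hA.le) (Set.mem_Ici.2 (hA.le.trans hy.le)) hy.le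
  have c2 : l yh₂ y₂ ≤ l yh₂ y₁ :=
    ha2 yh₂ (Set.mem_Iic.2 (hy.le.trans hB.le)) (Set.mem_Iic.2 hB.le) hy.le
  linarith
end

section
/- Let Y ⊆ ℝ be finite, Ŷ ⊆ ℝ finite, Φ : Y → Ŷ, and let ℓ : ℝ × ℝ → ℝ≥0 satisfy ℓ(ŷ, y) ≤ B for all y ∈ Y and ŷ ∈ Ŷ. Then for any probability distribution P on Y and any 0 < ε₂ ≤ ε, |L(RR-on-Bins^Φ_ε; P) − L(RR-on-Bins^Φ_{ε₂}; P)| ≤ 2B · (1 − e^{ε₂ − ε}) ≤ 2B · (ε − ε₂). -/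
/-- Helper: absolute difference of two nonnegatives each bounded by `X`. -/
lemma myAbsSubLe (x y X : ℝ) (hx0 : 0 ≤ x) (hy0 : 0 ≤ y)
    (hx : x ≤ X) (hy : y ≤ X) : |x - y| ≤ X :=
  abs_le.2 ⟨by linarith, by linarith⟩

/-- Sensitivity of the `RR-on-Bins` expected loss in the privacy parameter:
changing the parameter from `eps` to `eps₂ ≤ eps` changes the expected loss by at
most `2B(1 - exp (eps₂ - eps)) ≤ 2B(eps - eps₂)` for a loss bounded by `B`. -/
theorem stmt7
    (l : ℝ → ℝ → ℝ) (hl0 : ∀ yh y, 0 ≤ l yh y)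
    (B : ℝ) (Y Yh : Finset ℝ)
    (Phi : ℝ → ℝ) (hPhi : ∀ y ∈ Y, Phi y ∈ Yh)
    (hB : ∀ y ∈ Y, ∀ yh ∈ Yh, l yh y ≤ B)
    (p : ℝ → ℝ) (hp0 : ∀ y ∈ Y, 0 ≤ p y) (hp1 : ∑ y ∈ Y, p y = 1)
    (eps eps₂ : ℝ) (heps₂ : 0 < eps₂) (hle : eps₂ ≤ eps) :
    |rrLoss l eps Yh Phi Y p - rrLoss l eps₂ Yh Phi Y p|
        ≤ 2 * B * (1 - Real.exp (eps₂ - eps)) ∧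
      2 * B * (1 - Real.exp (eps₂ - eps)) ≤ 2 * B * (eps - eps₂) := by
  -- basic notations
  set u : ℝ := Real.exp eps with hu
  set v : ℝ := Real.exp eps₂ with hv
  have hv1 : 1 < v := by
    calc (1:ℝ) = Real.exp 0 := Real.exp_zero.symm
      _ < Real.exp eps₂ := Real.exp_lt_exp.2 heps₂
  have huv : v ≤ u := Real.exp_le_exp.2 hle
  -- Y is nonempty
  have hY : Y.Nonempty := by
    rcases Y.eq_empty_or_nonempty with h | h
    · rw [h] at hp1; simp at hp1
    · exact h
  obtain ⟨y₀, hy₀⟩ := hY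
  have hYh : Yh.Nonempty := ⟨Phi y₀, hPhi y₀ hy₀⟩
  have hB0 : 0 ≤ B := le_trans (hl0 _ _) (hB y₀ hy₀ _ (hPhi y₀ hy₀))
  set m : ℝ := (Yh.card : ℝ) with hmdef
  have hm : (1 : ℝ) ≤ m := by
    have h : 1 ≤ Yh.card := Finset.card_pos.2 hYh
    simp only [hmdef]
    exact_mod_cast h
  set D₁ : ℝ := u + m - 1 with hD₁def
  set D₂ : ℝ := v + m - 1 with hD₂def
  have hD₁ : 0 < D₁ := by simp only [hD₁def]; linarith
  have hD₂ : 0 < D₂ := by simp only [hD₂def]; linarith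
  have hexp : Real.exp (eps₂ - eps) = v / u := by rw [Real.exp_sub]
  have hu0 : 0 < u := Real.exp_pos _
  -- key ratio inequality
  have hkey : (m - 1) * (u - v) / (D₁ * D₂) ≤ 2 * (u - v) / u := by
    rw [div_le_div_iff₀ (by positivity) hu0]
    have h1 : 0 ≤ (u - v) * ((m - 1) * u) := by
      apply mul_nonneg (by linarith) (mul_nonneg (by linarith) (by linarith))
    have h2 : 0 ≤ (u - v) * (u * v) := by
      apply mul_nonneg (by linarith) (mul_nonneg (by linarith) (by linarith))
    have h3 : 0 ≤ (u - v) * ((m - 1) * v) := by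
      apply mul_nonneg (by linarith) (mul_nonneg (by linarith) (by linarith))
    have h4 : 0 ≤ (u - v) * ((m - 1) * (m - 1)) := by
      apply mul_nonneg (by linarith) (mul_nonneg (by linarith) (by linarith))
    simp only [hD₁def, hD₂def]
    nlinarith [h1, h2, h3, h4]
  have hCeq : 2 * B * (1 - Real.exp (eps₂ - eps)) = 2 * (u - v) / u * B := by
    rw [hexp]; field_simp
  -- per-point bound
  have key : ∀ y ∈ Y,
      |(∑ yh ∈ Yh, rrProb eps Yh Phi y yh * l yh y)
        - ∑ yh ∈ Yh, rrProb eps₂ Yh Phi y yh * l yh y|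
        ≤ 2 * B * (1 - Real.exp (eps₂ - eps)) := by
    intro y hy
    have hmem := hPhi y hy
    have h1 : ∑ yh ∈ Yh, rrProb eps Yh Phi y yh * l yh y
        = u / D₁ * l (Phi y) y + ∑ yh ∈ Yh.erase (Phi y), 1 / D₁ * l yh y := by
      rw [← Finset.add_sum_erase Yh _ hmem]
      congr 1
      · simp [rrProb, hu, hmdef, hD₁def]
      · refine Finset.sum_congr rfl fun yh hyh => ?_
        rw [rrProb, if_neg (Finset.ne_of_mem_erase hyh)]
    have h2 : ∑ yh ∈ Yh, rrProb eps₂ Yh Phi y yh * l yh y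
        = v / D₂ * l (Phi y) y + ∑ yh ∈ Yh.erase (Phi y), 1 / D₂ * l yh y := by
      rw [← Finset.add_sum_erase Yh _ hmem]
      congr 1
      · simp [rrProb, hv, hmdef, hD₂def]
      · refine Finset.sum_congr rfl fun yh hyh => ?_
        rw [rrProb, if_neg (Finset.ne_of_mem_erase hyh)]
    set A : ℝ := u / D₁ - v / D₂ with hAdef
    set T : ℝ := ∑ yh ∈ Yh.erase (Phi y), l yh y with hTdef
    have hdiff : (∑ yh ∈ Yh, rrProb eps Yh Phi y yh * l yh y)
        - ∑ yh ∈ Yh, rrProb eps₂ Yh Phi y yh * l yh y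
        = A * l (Phi y) y - (1 / D₂ - 1 / D₁) * T := by
      rw [h1, h2]
      have e : (1 / D₂ - 1 / D₁) * T
          = (∑ yh ∈ Yh.erase (Phi y), 1 / D₂ * l yh y)
            - ∑ yh ∈ Yh.erase (Phi y), 1 / D₁ * l yh y := by
        rw [sub_mul, hTdef, Finset.mul_sum, Finset.mul_sum]
      rw [e, hAdef]
      ring
    have hAval : A = (m - 1) * (u - v) / (D₁ * D₂) := by
      simp only [hAdef]
      field_simp
      simp only [hD₁def, hD₂def]
      ring
    have hδval : 1 / D₂ - 1 / D₁ = (u - v) / (D₁ * D₂) := by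
      field_simp
      simp only [hD₁def, hD₂def]
      ring
    have hA0 : 0 ≤ A := by
      rw [hAval]
      apply div_nonneg _ (by positivity)
      apply mul_nonneg (by linarith) (by linarith)
    have hδ0 : 0 ≤ 1 / D₂ - 1 / D₁ := by
      rw [hδval]; apply div_nonneg (by linarith) (by positivity)
    have hT0 : 0 ≤ T := Finset.sum_nonneg fun yh _ => hl0 yh y
    have hTB : T ≤ (m - 1) * B := by
      have hcard : ((Yh.erase (Phi y)).card : ℝ) = m - 1 := by
        rw [Finset.card_erase_of_mem hmem]
        have : 1 ≤ Yh.card := Finset.card_pos.2 hYh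
        push_cast [Nat.cast_sub this]
        simp [hmdef]
      calc T ≤ (Yh.erase (Phi y)).card • B :=
            Finset.sum_le_card_nsmul _ _ B fun yh hyh =>
              hB y hy yh (Finset.mem_of_mem_erase hyh)
        _ = (m - 1) * B := by rw [nsmul_eq_mul, hcard]
    have hlB : l (Phi y) y ≤ B := hB y hy _ hmem
    have hl0' : 0 ≤ l (Phi y) y := hl0 _ _
    -- the common bound
    have hbound : (m - 1) * (u - v) / (D₁ * D₂) * B ≤ 2 * (u - v) / u * B :=
      mul_le_mul_of_nonneg_right hkey hB0
    have hupper : A * l (Phi y) y ≤ 2 * (u - v) / u * B := by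
      calc A * l (Phi y) y ≤ A * B := mul_le_mul_of_nonneg_left hlB hA0
        _ ≤ 2 * (u - v) / u * B := by rw [hAval]; exact hbound
    have hlower : (1 / D₂ - 1 / D₁) * T ≤ 2 * (u - v) / u * B := by
      calc (1 / D₂ - 1 / D₁) * T ≤ (1 / D₂ - 1 / D₁) * ((m - 1) * B) :=
            mul_le_mul_of_nonneg_left hTB hδ0
        _ = (m - 1) * (u - v) / (D₁ * D₂) * B := by rw [hδval]; ring
        _ ≤ 2 * (u - v) / u * B := hbound
    have hApos : 0 ≤ A * l (Phi y) y := mul_nonneg hA0 hl0'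
    have hδpos : 0 ≤ (1 / D₂ - 1 / D₁) * T := mul_nonneg hδ0 hT0
    rw [hdiff, hCeq]
    exact myAbsSubLe _ _ _ hApos hδpos hupper hlower
  constructor
  · have hL : rrLoss l eps Yh Phi Y p - rrLoss l eps₂ Yh Phi Y p
        = ∑ y ∈ Y, p y * ((∑ yh ∈ Yh, rrProb eps Yh Phi y yh * l yh y)
            - ∑ yh ∈ Yh, rrProb eps₂ Yh Phi y yh * l yh y) := by
      rw [rrLoss, rrLoss, ← Finset.sum_sub_distrib]
      exact Finset.sum_congr rfl fun y _ => by ring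
    rw [hL]
    calc |∑ y ∈ Y, p y * ((∑ yh ∈ Yh, rrProb eps Yh Phi y yh * l yh y)
            - ∑ yh ∈ Yh, rrProb eps₂ Yh Phi y yh * l yh y)|
        ≤ ∑ y ∈ Y, |p y * ((∑ yh ∈ Yh, rrProb eps Yh Phi y yh * l yh y)
            - ∑ yh ∈ Yh, rrProb eps₂ Yh Phi y yh * l yh y)| :=
          Finset.abs_sum_le_sum_abs _ _
      _ ≤ ∑ y ∈ Y, p y * (2 * B * (1 - Real.exp (eps₂ - eps))) := by
          refine Finset.sum_le_sum fun y hy => ?_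
          rw [abs_mul, abs_of_nonneg (hp0 y hy)]
          exact mul_le_mul_of_nonneg_left (key y hy) (hp0 y hy)
      _ = 2 * B * (1 - Real.exp (eps₂ - eps)) := by
          rw [← Finset.sum_mul, hp1, one_mul]
  · have h := Real.add_one_le_exp (eps₂ - eps)
    have : 1 - Real.exp (eps₂ - eps) ≤ eps - eps₂ := by linarith
    have h2B : 0 ≤ 2 * B := by linarith
    exact mul_le_mul_of_nonneg_left this h2B
end

section
/- Let Y, Ω, Ŷ be finite sets, let n ∈ ℕ, and let ε₁, ε₂ ≥ 0. Let K assign to each dataset (y₁, …, y_n) ∈ Yⁿ a probability distribution on Ω such that K is ε₁-DP: for all datasets y, y' ∈ Yⁿ differing in exactly one coordinate and all ω ∈ Ω, Pr[K(y) = ω] ≤ e^{ε₁} · Pr[K(y') = ω]. Let R : Ω × Y → (probability distributions on Ŷ) be such that for every ω ∈ Ω the local randomizer R(ω, ·) is ε₂-DP: Pr[R(ω, y) = ŷ] ≤ e^{ε₂} · Pr[R(ω, y') = ŷ] for all y, y' ∈ Y and ŷ ∈ Ŷ. Define the mechanism A(y₁, …, y_n) that samples ω ∼ K(y₁, …, y_n)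 and then outputs (ŷ₁, …, ŷ_n) where each ŷ_i ∼ R(ω, y_i) independently. Then A is (ε₁ + ε₂)-DP: for all datasets y, y' ∈ Yⁿ differing in exactly one coordinate and all (ẑ₁, …, ẑ_n) ∈ Ŷⁿ, Σ_{ω∈Ω} Pr[K(y) = ω] · Π_{i=1}^n Pr[R(ω, y_i) = ẑ_i] ≤ e^{ε₁+ε₂} · Σ_{ω∈Ω} Pr[K(y') = ω] · Π_{i=1}^n Pr[R(ω, y'_i) = ẑ_i]. -/
/-- Composition underlying the privacy of `LabelRandomizer`: if `K` is an `eps₁`-DP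
mechanism from datasets of labels to a finite set `Ω`, and for each `ω ∈ Ω`,
`R ω` is an `eps₂`-DP local randomizer applied independently to each label, then
the combined mechanism is `(eps₁ + eps₂)`-DP. -/
theorem stmt10
    {Y Ω Yh : Type*} [Fintype Y] [Fintype Ω] [Fintype Yh]
    (n : ℕ) (eps₁ eps₂ : ℝ) (heps₁ : 0 ≤ eps₁) (heps₂ : 0 ≤ eps₂)
    (K : (Fin n → Y) → Ω → ℝ)
    (hK0 : ∀ ys ω, 0 ≤ K ys ω)
    (hK1 : ∀ ys, ∑ ω, K ys ω = 1)
    (hKdp : ∀ ys ys' : Fin n → Y,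
      (∃ i, ys i ≠ ys' i ∧ ∀ j, j ≠ i → ys j = ys' j) →
      ∀ ω, K ys ω ≤ Real.exp eps₁ * K ys' ω)
    (R : Ω → Y → Yh → ℝ)
    (hR0 : ∀ ω y yh, 0 ≤ R ω y yh)
    (hR1 : ∀ ω y, ∑ yh, R ω y yh = 1)
    (hRdp : ∀ ω, ∀ y y' : Y, ∀ yh, R ω y yh ≤ Real.exp eps₂ * R ω y' yh) :
    ∀ ys ys' : Fin n → Y,
      (∃ i, ys i ≠ ys' i ∧ ∀ j, j ≠ i → ys j = ys' j) →
      ∀ zs : Fin n → Yh,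
        ∑ ω, K ys ω * ∏ i, R ω (ys i) (zs i)
          ≤ Real.exp (eps₁ + eps₂) * ∑ ω, K ys' ω * ∏ i, R ω (ys' i) (zs i) := by
  rintro ys ys' ⟨i, hi, hj⟩ zs
  have hprod : ∀ ω, ∏ k, R ω (ys k) (zs k)
      ≤ Real.exp eps₂ * ∏ k, R ω (ys' k) (zs k) := by
    intro ω
    rw [Fintype.prod_eq_mul_prod_compl i, Fintype.prod_eq_mul_prod_compl i,
      ← mul_assoc]
    have hrest : ∏ k ∈ {i}ᶜ, R ω (ys k) (zs k) = ∏ k ∈ {i}ᶜ, R ω (ys' k) (zs k) := by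
      apply Finset.prod_congr rfl
      intro k hk
      rw [hj k (by simpa using hk)]
    rw [hrest]
    apply mul_le_mul_of_nonneg_right (hRdp ω (ys i) (ys' i) (zs i))
    exact Finset.prod_nonneg fun k _ => hR0 _ _ _
  have := fun ω => hKdp ys ys' ⟨i, hi, hj⟩ ω
  rw [Real.exp_add, Finset.mul_sum]
  apply Finset.sum_le_sum
  intro ω _
  calc K ys ω * ∏ k, R ω (ys k) (zs k)
      ≤ (Real.exp eps₁ * K ys' ω) * (Real.exp eps₂ * ∏ k, R ω (ys' k) (zs k)) := by
        apply mul_le_mul (this ω) (hprod ω)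
          (Finset.prod_nonneg fun k _ => hR0 _ _ _)
          (mul_nonneg (Real.exp_pos _).le (hK0 _ _))
    _ = Real.exp eps₁ * Real.exp eps₂ * (K ys' ω * ∏ k, R ω (ys' k) (zs k)) := by ring
end

section
/- Let P be a probability measure on ℝ and ℓ : ℝ × ℝ → ℝ≥0 be such that y ↦ ℓ(ŷ, y) is P-integrable for every ŷ ∈ ℝ. For n ≥ 1, let β_n := inf over finite sets Ŷ ⊆ ℝ with |Ŷ| = n and measurable maps Φ : ℝ → Ŷ of L(RR-on-Bins^Φ_ε; P). Then for every ε > 0, liminf_{n→∞} β_n ≥ β₁ = inf_{ŷ∈ℝ} ∫ ℓ(ŷ, y) dP(y). -/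
open MeasureTheory

/-- Expected loss of the `RR-on-Bins` mechanism with output set `Yh`, map `Phi`
and privacy parameter `eps`, under a prior probability measure `P` on labels. -/
noncomputable def rrNLoss (l : ℝ → ℝ → ℝ) (eps : ℝ) (Yh : Finset ℝ) (Phi : ℝ → ℝ)
    (P : Measure ℝ) : ℝ :=
  ∫ y, ((∑ yh ∈ Yh, (1 / (Real.exp eps + (Yh.card : ℝ) - 1)) * l yh y) +
      ((Real.exp eps - 1) / (Real.exp eps + (Yh.card : ℝ) - 1)) * l (Phi y) y) ∂P

/-- `betaN l eps P n`: the infimum of the expected loss over all `n`-bin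
`RR-on-Bins` mechanisms. -/
noncomputable def betaN (l : ℝ → ℝ → ℝ) (eps : ℝ) (P : Measure ℝ) (n : ℕ) : ℝ :=
  sInf { L : ℝ | ∃ (Yh : Finset ℝ) (Phi : ℝ → ℝ),
    Yh.card = n ∧ Measurable Phi ∧ (∀ y, Phi y ∈ Yh) ∧ L = rrNLoss l eps Yh Phi P }

/-- `y ↦ l (Phi y) y` as a finite sum of indicators. -/
lemma phi_eq_sum {l : ℝ → ℝ → ℝ} (Yh : Finset ℝ) (Phi : ℝ → ℝ) (hPhi : ∀ y, Phi y ∈ Yh) :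
    (fun y => l (Phi y) y)
      = fun y => ∑ yh ∈ Yh, Set.indicator (Phi ⁻¹' {yh}) (fun z => l yh z) y := by
  funext y
  rw [Finset.sum_eq_single (Phi y)]
  · simp [Set.indicator_of_mem, Set.mem_preimage]
  · intro b _ hb
    apply Set.indicator_of_notMem
    simp only [Set.mem_preimage, Set.mem_singleton_iff]
    exact fun h => hb h.symm
  · intro h; exact absurd (hPhi y) h

lemma integrable_phi {P : Measure ℝ} {l : ℝ → ℝ → ℝ}
    (hint : ∀ yh : ℝ, Integrable (fun y => l yh y) P)
    (Yh : Finset ℝ) (Phi : ℝ → ℝ) (hPhim : Measurable Phi)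
    (hPhi : ∀ y, Phi y ∈ Yh) : Integrable (fun y => l (Phi y) y) P := by
  rw [phi_eq_sum Yh Phi hPhi]
  exact integrable_finset_sum _ fun yh _ =>
    (hint yh).indicator (hPhim (measurableSet_singleton yh))

/-- The liminf of the optimal `n`-bin `RR-on-Bins` losses is at least the optimal
1-bin loss, which equals `inf_{yh} ∫ l(yh, y) dP(y)`. -/
theorem stmt14
    (P : Measure ℝ) [IsProbabilityMeasure P]
    (l : ℝ → ℝ → ℝ) (hl0 : ∀ yh y, 0 ≤ l yh y)
    (hint : ∀ yh : ℝ, Integrable (fun y => l yh y) P)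
    (eps : ℝ) (heps : 0 < eps) :
    betaN l eps P 1 ≤ Filter.liminf (fun n => betaN l eps P n) Filter.atTop ∧
    betaN l eps P 1 = ⨅ yh : ℝ, ∫ y, l yh y ∂P := by
  have hexp : (1:ℝ) < Real.exp eps := by
    rw [show (1:ℝ) = Real.exp 0 by simp]; exact Real.exp_lt_exp.2 heps
  set g : ℝ → ℝ := fun yh => ∫ y, l yh y ∂P with hg
  have hg0 : ∀ yh, 0 ≤ g yh := fun yh => integral_nonneg (fun y => hl0 yh y)
  have hbdd : BddBelow (Set.range g) := ⟨0, by rintro _ ⟨yh, rfl⟩; exact hg0 yh⟩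
  set β : ℝ := ⨅ yh : ℝ, g yh with hβ
  have hβ0 : 0 ≤ β := Real.iInf_nonneg hg0
  have hβle : ∀ yh, β ≤ g yh := fun yh => ciInf_le hbdd yh
  -- positivity of denominators
  have hD : ∀ n : ℕ, 0 < Real.exp eps + (n : ℝ) - 1 := by
    intro n
    have : (0:ℝ) ≤ n := Nat.cast_nonneg n
    linarith
  -- key computation of the loss
  have hloss : ∀ (Yh : Finset ℝ) (Phi : ℝ → ℝ), Measurable Phi → (∀ y, Phi y ∈ Yh) →
      rrNLoss l eps Yh Phi P
        = (∑ yh ∈ Yh, (1 / (Real.exp eps + (Yh.card : ℝ) - 1)) * g yh)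
          + ((Real.exp eps - 1) / (Real.exp eps + (Yh.card : ℝ) - 1))
            * ∫ y, l (Phi y) y ∂P := by
    intro Yh Phi hPhim hPhi
    have hphi := integrable_phi hint Yh Phi hPhim hPhi
    rw [rrNLoss, integral_add, integral_finset_sum, integral_const_mul]
    · congr 1
      exact Finset.sum_congr rfl fun yh _ => (integral_const_mul _ _)
    · exact fun yh _ => (hint yh).const_mul _
    · exact integrable_finset_sum _ fun yh _ => (hint yh).const_mul _
    · exact hphi.const_mul _
  -- part 2 : betaN 1 = β
  have h1 : betaN l eps P 1 = β := by
    have hset : { L : ℝ | ∃ (Yh : Finset ℝ) (Phi : ℝ → ℝ),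
        Yh.card = 1 ∧ Measurable Phi ∧ (∀ y, Phi y ∈ Yh) ∧ L = rrNLoss l eps Yh Phi P }
        = Set.range g := by
      ext L
      constructor
      · rintro ⟨Yh, Phi, hcard, hPhim, hPhi, rfl⟩
        obtain ⟨a, rfl⟩ := Finset.card_eq_one.1 hcard
        refine ⟨a, ?_⟩
        have hPa : ∀ y, Phi y = a := fun y => Finset.mem_singleton.1 (hPhi y)
        rw [hloss _ _ hPhim hPhi]
        have h2 : (∫ y, l (Phi y) y ∂P) = g a := by
          congr 1; funext y; rw [hPa y]
        rw [h2]
        simp only [Finset.card_singleton, Nat.cast_one, Finset.sum_singleton]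
        have hne : Real.exp eps + 1 - 1 ≠ 0 := by have := hD 1; push_cast at this ⊢; linarith
        field_simp
        ring
      · rintro ⟨a, rfl⟩
        refine ⟨{a}, fun _ => a, Finset.card_singleton a, measurable_const,
          fun y => Finset.mem_singleton_self a, ?_⟩
        rw [hloss _ _ measurable_const (fun y => Finset.mem_singleton_self a)]
        simp only [Finset.card_singleton, Nat.cast_one, Finset.sum_singleton]
        have hne : Real.exp eps + 1 - 1 ≠ 0 := by have := hD 1; push_cast at this ⊢; linarith
        field_simp
        ring
    rw [betaN, hset, hβ]
    exact sInf_range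
  -- lower bound for betaN n, n ≥ 1
  have hlow : ∀ n : ℕ, 1 ≤ n →
      (n : ℝ) / (Real.exp eps + (n:ℝ) - 1) * β ≤ betaN l eps P n := by
    intro n hn
    apply le_csInf
    · -- nonempty
      refine ⟨rrNLoss l eps ((Finset.range n).image (Nat.cast)) (fun _ => (0:ℝ)) P,
        (Finset.range n).image (Nat.cast), fun _ => (0:ℝ), ?_, measurable_const, ?_, rfl⟩
      · rw [Finset.card_image_of_injective _ Nat.cast_injective, Finset.card_range]
      · intro y
        simp only [Finset.mem_image, Finset.mem_range]
        exact ⟨0, hn, by simp⟩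
    · rintro L ⟨Yh, Phi, hcard, hPhim, hPhi, rfl⟩
      rw [hloss _ _ hPhim hPhi, hcard]
      have hDn := hD n
      have h1 : (n : ℝ) / (Real.exp eps + (n:ℝ) - 1) * β
          ≤ ∑ yh ∈ Yh, (1 / (Real.exp eps + (n:ℝ) - 1)) * g yh := by
        have : ∀ yh ∈ Yh, (1 / (Real.exp eps + (n:ℝ) - 1)) * β
            ≤ (1 / (Real.exp eps + (n:ℝ) - 1)) * g yh := fun yh _ =>
          mul_le_mul_of_nonneg_left (hβle yh) (one_div_nonneg.2 hDn.le)
        calc (n : ℝ) / (Real.exp eps + (n:ℝ) - 1) * β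
            = ∑ _yh ∈ Yh, (1 / (Real.exp eps + (n:ℝ) - 1)) * β := by
              rw [Finset.sum_const, hcard, nsmul_eq_mul]; ring
          _ ≤ _ := Finset.sum_le_sum this
      have h2 : 0 ≤ ((Real.exp eps - 1) / (Real.exp eps + (n:ℝ) - 1))
          * ∫ y, l (Phi y) y ∂P := by
        apply mul_nonneg (div_nonneg (by linarith) hDn.le)
        exact integral_nonneg fun y => hl0 _ y
      linarith
  -- upper bound : betaN n ≤ C for n ≥ 1
  obtain ⟨k, hk⟩ : ∃ k : ℕ, {yh : ℝ | g yh ≤ (k:ℝ)}.Infinite := by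
    by_contra h
    push_neg at h
    have : (Set.univ : Set ℝ).Countable := by
      apply Set.Countable.mono _ (Set.countable_iUnion fun k : ℕ => (h k).countable)
      intro yh _
      simp only [Set.mem_iUnion, Set.mem_setOf_eq]
      exact ⟨⌈g yh⌉₊, Nat.le_ceil _⟩
    exact Cardinal.not_countable_real this
  have hup : ∀ n : ℕ, 1 ≤ n → betaN l eps P n ≤ (k : ℝ) := by
    intro n hn
    obtain ⟨t, hts, htc⟩ := hk.exists_subset_card_eq n
    have htne : t.Nonempty := Finset.card_pos.1 (htc ▸ hn)
    obtain ⟨a, ha⟩ := htne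
    have hbd : ∀ yh ∈ t, g yh ≤ (k:ℝ) := fun yh hyh => hts hyh
    have hmem : rrNLoss l eps t (fun _ => a) P ∈
        { L : ℝ | ∃ (Yh : Finset ℝ) (Phi : ℝ → ℝ),
          Yh.card = n ∧ Measurable Phi ∧ (∀ y, Phi y ∈ Yh) ∧ L = rrNLoss l eps Yh Phi P } :=
      ⟨t, fun _ => a, htc, measurable_const, fun _ => ha, rfl⟩
    have hbddb : BddBelow { L : ℝ | ∃ (Yh : Finset ℝ) (Phi : ℝ → ℝ),
        Yh.card = n ∧ Measurable Phi ∧ (∀ y, Phi y ∈ Yh) ∧ L = rrNLoss l eps Yh Phi P } := by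
      refine ⟨0, ?_⟩
      rintro L ⟨Yh, Phi, hcard, hPhim, hPhi, rfl⟩
      refine integral_nonneg fun y => ?_
      have ha1 : (0:ℝ) ≤ ∑ yh ∈ Yh, (1 / (Real.exp eps + (Yh.card : ℝ) - 1)) * l yh y :=
        Finset.sum_nonneg fun yh _ =>
          mul_nonneg (one_div_nonneg.2 (hD Yh.card).le) (hl0 yh y)
      have ha2 : (0:ℝ) ≤ ((Real.exp eps - 1) / (Real.exp eps + (Yh.card : ℝ) - 1)) * l (Phi y) y :=
        mul_nonneg (div_nonneg (by linarith) (hD Yh.card).le) (hl0 _ y)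
      exact add_nonneg ha1 ha2
    rw [betaN]
    refine le_trans (csInf_le hbddb hmem) ?_
    rw [hloss _ _ measurable_const (fun _ => ha), htc]
    have hDn := hD n
    have hsum : ∑ yh ∈ t, (1 / (Real.exp eps + (n:ℝ) - 1)) * g yh
        ≤ (n:ℝ) / (Real.exp eps + (n:ℝ) - 1) * k := by
      calc ∑ yh ∈ t, (1 / (Real.exp eps + (n:ℝ) - 1)) * g yh
          ≤ ∑ _yh ∈ t, (1 / (Real.exp eps + (n:ℝ) - 1)) * k :=
            Finset.sum_le_sum fun yh hyh =>
              mul_le_mul_of_nonneg_left (hbd yh hyh) (one_div_nonneg.2 hDn.le)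
        _ = (n:ℝ) / (Real.exp eps + (n:ℝ) - 1) * k := by
            rw [Finset.sum_const, htc, nsmul_eq_mul]; ring
    have hga : (∫ y, l ((fun _ => a) y) y ∂P) = g a := rfl
    rw [hga]
    have h2 : ((Real.exp eps - 1) / (Real.exp eps + (n:ℝ) - 1)) * g a
        ≤ ((Real.exp eps - 1) / (Real.exp eps + (n:ℝ) - 1)) * k :=
      mul_le_mul_of_nonneg_left (hbd a ha) (div_nonneg (by linarith) hDn.le)
    have : (n:ℝ) / (Real.exp eps + (n:ℝ) - 1) * k
        + ((Real.exp eps - 1) / (Real.exp eps + (n:ℝ) - 1)) * k = k := by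
      field_simp
      ring
    linarith
  -- assemble
  refine ⟨?_, h1⟩
  rw [h1]
  set c : ℕ → ℝ := fun n => (n : ℝ) / (Real.exp eps + (n:ℝ) - 1) * β with hc
  have htend : Filter.Tendsto c Filter.atTop (nhds β) := by
    have h0 : Filter.Tendsto (fun n : ℕ => (n:ℝ) / ((n:ℝ) + (Real.exp eps - 1)))
        Filter.atTop (nhds 1) := tendsto_natCast_div_add_atTop _
    have heq : c = fun n : ℕ => ((n:ℝ) / ((n:ℝ) + (Real.exp eps - 1))) * β := by
      funext n; rw [hc]; ring_nf
    rw [heq]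
    simpa using h0.mul_const β
  have hcob : Filter.IsCoboundedUnder (· ≥ ·) Filter.atTop (fun n => betaN l eps P n) :=
    Filter.isCoboundedUnder_ge_of_eventually_le Filter.atTop
      (Filter.eventually_atTop.2 ⟨1, hup⟩)
  have hev : ∀ᶠ n in Filter.atTop, c n ≤ betaN l eps P n :=
    Filter.eventually_atTop.2 ⟨1, hlow⟩
  calc β = Filter.liminf c Filter.atTop := (htend.liminf_eq).symm
    _ ≤ Filter.liminf (fun n => betaN l eps P n) Filter.atTop :=
        Filter.liminf_le_liminf hev (htend.isBoundedUnder_ge) hcob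
end
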